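/- arXiv:2312.16271 — 9 statements merged into one kernel-verified Lean document; each statement's English description precedes it below -/
import Mathlib

section
/- For vectors x, y in Z_2^n with 0 < d_H(x,y) < n, the pair distance satisfies d_H(x,y) + 1 ≤ d_p(x,y) ≤ 2·d_H(x,y). Moreover, if d_H(x,y) = 0 or d_H(x,y) = n, then d_p(x,y) = d_H(x,y). -/
/-- The pair distance: Hamming distance of the cyclic symbol-pair read vectors. -/
def pairDist {n : ℕ} (x y : Fin n → ZMod 2) : ℕ :=
  (Finset.univ.filter fun i : Fin n =>
    (x i, x (i + ⟨1 % n, Nat.mod_lt 1 i.pos⟩)) ≠ (y i, y (i + ⟨1 % n, Nat.mod_lt 1 i.pos⟩))).card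

open Fin.NatCast Fin.CommRing in
theorem stmt_0 (n : ℕ) (x y : Fin n → ZMod 2) :
    (0 < hammingDist x y → hammingDist x y < n →
      hammingDist x y + 1 ≤ pairDist x y ∧ pairDist x y ≤ 2 * hammingDist x y) ∧
    ((hammingDist x y = 0 ∨ hammingDist x y = n) → pairDist x y = hammingDist x y) := by
  have hDcard : hammingDist x y = (Finset.univ.filter fun i : Fin n => x i ≠ y i).card := rfl
  constructor
  · intro h1 h2
    have hn : 2 ≤ n := by omega
    haveI : NeZero n := ⟨by omega⟩
    have hs : ∀ i : Fin n, (⟨1 % n, Nat.mod_lt 1 i.pos⟩ : Fin n) = 1 := by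
      intro i
      apply Fin.ext
      simp [Fin.val_one', Nat.mod_eq_of_lt (by omega : 1 < n)]
    have hpair : pairDist x y =
        (Finset.univ.filter fun i : Fin n => x i ≠ y i ∨ x (i+1) ≠ y (i+1)).card := by
      unfold pairDist
      congr 1
      apply Finset.filter_congr
      intro i _
      rw [hs i]
      constructor
      · intro h
        by_contra hc
        push_neg at hc
        exact h (by rw [hc.1, hc.2])
      · intro h hc
        rcases h with h | h
        · exact h (congrArg Prod.fst hc)
        · exact h (congrArg Prod.snd hc)
    constructor
    · -- lower bound
      have hstrict : ∃ i : Fin n, x i = y i ∧ x (i+1) ≠ y (i+1) := by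
        by_contra hc
        push_neg at hc
        obtain ⟨k, hk⟩ : ∃ k : Fin n, x k = y k := by
          by_contra hall
          push_neg at hall
          have huniv : (Finset.univ.filter fun i : Fin n => x i ≠ y i) = Finset.univ :=
            Finset.eq_univ_of_forall (fun i => by simp [hall i])
          rw [hDcard, huniv, Finset.card_univ, Fintype.card_fin] at h2
          omega
        obtain ⟨j, hj⟩ : ∃ j : Fin n, x j ≠ y j := by
          by_contra hall
          push_neg at hall
          have hemp : (Finset.univ.filter fun i : Fin n => x i ≠ y i) = ∅ := by
            apply Finset.filter_false_of_mem
            intro i _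
            simp [hall i]
          rw [hDcard, hemp, Finset.card_empty] at h1
          omega
        have key : ∀ t : ℕ, x (k + (t : Fin n)) = y (k + (t : Fin n)) := by
          intro t
          induction t with
          | zero => simpa using hk
          | succ t ih =>
            have hcast : ((t+1 : ℕ) : Fin n) = (t : Fin n) + 1 := by push_cast; ring
            rw [hcast, ← add_assoc]
            exact hc _ ih
        have := key (j - k).val
        rw [Fin.cast_val_eq_self] at this
        have hkj : k + (j - k) = j := by ring
        rw [hkj] at this
        exact hj this
      obtain ⟨i, hi1, hi2⟩ := hstrict
      have hss : (Finset.univ.filter fun i : Fin n => x i ≠ y i) ⊂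
          (Finset.univ.filter fun i : Fin n => x i ≠ y i ∨ x (i+1) ≠ y (i+1)) := by
        rw [Finset.ssubset_iff_of_subset]
        · exact ⟨i, by simp [hi2], by simp [hi1]⟩
        · intro a ha
          simp only [Finset.mem_filter, Finset.mem_univ, true_and] at ha ⊢
          exact Or.inl ha
      have := Finset.card_lt_card hss
      rw [hDcard, hpair]
      omega
    · -- upper bound
      have hQcard : (Finset.univ.filter fun i : Fin n => x (i+1) ≠ y (i+1)).card =
          (Finset.univ.filter fun i : Fin n => x i ≠ y i).card := by
        apply Finset.card_bij' (fun i _ => i + 1) (fun j _ => j - 1)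
        · intro a _; ring
        · intro b _; ring
        · intro a ha
          simp only [Finset.mem_filter, Finset.mem_univ, true_and] at ha ⊢
          exact ha
        · intro b hb
          simp only [Finset.mem_filter, Finset.mem_univ, true_and] at hb ⊢
          rwa [sub_add_cancel]
      rw [hpair, hDcard]
      calc (Finset.univ.filter fun i : Fin n => x i ≠ y i ∨ x (i+1) ≠ y (i+1)).card
          ≤ ((Finset.univ.filter fun i : Fin n => x i ≠ y i) ∪
             (Finset.univ.filter fun i : Fin n => x (i+1) ≠ y (i+1))).card := by
            apply Finset.card_le_card
            intro a ha
            simp only [Finset.mem_filter, Finset.mem_univ, true_and, Finset.mem_union] at ha ⊢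
            exact ha
        _ ≤ _ + _ := Finset.card_union_le _ _
        _ = 2 * (Finset.univ.filter fun i : Fin n => x i ≠ y i).card := by rw [hQcard]; ring
  · intro h
    rcases h with h | h
    · have hxy : x = y := hammingDist_eq_zero.mp h
      subst hxy
      rw [h]
      unfold pairDist
      simp
    · have huniv : (Finset.univ.filter fun i : Fin n => x i ≠ y i) = Finset.univ := by
        apply Finset.eq_univ_of_card
        rw [← hDcard, h, Fintype.card_fin]
      have hall : ∀ i : Fin n, x i ≠ y i := by
        intro i
        have := huniv ▸ Finset.mem_univ i
        simpa using (Finset.mem_filter.mp this).2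
      unfold pairDist
      rw [h]
      rw [Finset.filter_true_of_mem, Finset.card_univ, Fintype.card_fin]
      intro i _
      intro hc
      exact hall i (congrArg Prod.fst hc)
end

section
/- Let u = (u^(1), u^(2)) and v = (v^(1), v^(2)) be vectors in Z_2^{m+r} split into their first m and last r coordinates. Then d_p(u^(1),v^(1)) + d_p(u^(2),v^(2)) − 1 ≤ d_p(u,v) ≤ d_p(u^(1),v^(1)) + d_p(u^(2),v^(2)) + 1. -/
/-- cyclic successor -/
def succ1 {n : ℕ} (i : Fin n) : Fin n := i + ⟨1 % n, Nat.mod_lt 1 i.pos⟩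

lemma succ1_val {n : ℕ} (i : Fin n) : (succ1 i).val = (i.val + 1) % n := by
  simp only [succ1, Fin.add_def]
  conv_rhs => rw [Nat.add_mod, Nat.mod_eq_of_lt i.isLt]

lemma pairDist_eq {n : ℕ} (x y : Fin n → ZMod 2) :
    pairDist x y = ∑ i : Fin n,
      if x i ≠ y i ∨ x (succ1 i) ≠ y (succ1 i) then 1 else 0 := by
  rw [pairDist, Finset.card_filter]
  refine Finset.sum_congr rfl fun i _ => ?_
  have h : (i + ⟨1 % n, Nat.mod_lt 1 i.pos⟩) = succ1 i := rfl
  rw [h]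
  exact if_congr (by constructor <;> · intro hh; simp [Prod.ext_iff, not_and_or] at hh ⊢; tauto)
    rfl rfl

lemma four_ineq (p q s t : Prop) [Decidable p] [Decidable q] [Decidable s] [Decidable t] :
    ((if p ∨ q then 1 else 0) + (if s ∨ t then 1 else 0) ≤
      (if p ∨ t then 1 else 0) + (if s ∨ q then 1 else 0) + 1) ∧
    ((if p ∨ t then 1 else 0) + (if s ∨ q then 1 else 0) ≤
      (if p ∨ q then 1 else 0) + (if s ∨ t then 1 else 0) + 1) := by
  by_cases hp : p <;> by_cases hq : q <;> by_cases hs : s <;> by_cases ht : t <;>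
    simp [hp, hq, hs, ht]

theorem stmt_1 (m r : ℕ) (hm : 1 ≤ m) (hr : 1 ≤ r)
    (u v : Fin (m + r) → ZMod 2) :
    pairDist (fun i : Fin m => u (Fin.castAdd r i)) (fun i : Fin m => v (Fin.castAdd r i)) +
        pairDist (fun i : Fin r => u (Fin.natAdd m i)) (fun i : Fin r => v (Fin.natAdd m i)) - 1 ≤
      pairDist u v ∧
    pairDist u v ≤
      pairDist (fun i : Fin m => u (Fin.castAdd r i)) (fun i : Fin m => v (Fin.castAdd r i)) +
        pairDist (fun i : Fin r => u (Fin.natAdd m i)) (fun i : Fin r => v (Fin.natAdd m i)) + 1 := by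
  obtain ⟨m', rfl⟩ : ∃ m', m = m' + 1 := ⟨m - 1, by omega⟩
  obtain ⟨r', rfl⟩ : ∃ r', r = r' + 1 := ⟨r - 1, by omega⟩
  clear hm hr
  have hm1 : m' + 1 < m' + 1 + (r' + 1) := by omega
  have h0 : 0 < m' + 1 + (r' + 1) := by omega
  -- middle index identities
  have key1 : ∀ i : Fin m',
      succ1 (Fin.castAdd (r' + 1) i.castSucc) = Fin.castAdd (r' + 1) (succ1 i.castSucc) := by
    intro i
    apply Fin.ext
    simp only [succ1_val, Fin.coe_castAdd, Fin.coe_castSucc]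
    have : i.1 < m' := i.isLt
    rw [Nat.mod_eq_of_lt (by omega), Nat.mod_eq_of_lt (by omega)]
  have key2 : ∀ j : Fin r',
      succ1 (Fin.natAdd (m' + 1) j.castSucc) = Fin.natAdd (m' + 1) (succ1 j.castSucc) := by
    intro j
    apply Fin.ext
    simp only [succ1_val, Fin.coe_natAdd, Fin.coe_castSucc]
    have : j.1 < r' := j.isLt
    rw [Nat.mod_eq_of_lt (by omega), Nat.mod_eq_of_lt (by omega)]
    omega
  -- boundary index identities
  have B1 : succ1 (Fin.castAdd (r' + 1) (Fin.last m')) = (⟨m' + 1, hm1⟩ : Fin (m' + 1 + (r' + 1))) := by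
    apply Fin.ext
    simp only [succ1_val, Fin.coe_castAdd, Fin.val_last]
    rw [Nat.mod_eq_of_lt (by omega)]
  have B3 : Fin.castAdd (r' + 1) (succ1 (Fin.last m')) = (⟨0, h0⟩ : Fin (m' + 1 + (r' + 1))) := by
    apply Fin.ext
    simp only [succ1_val, Fin.coe_castAdd, Fin.val_last, Nat.mod_self]
  have B4 : succ1 (Fin.natAdd (m' + 1) (Fin.last r')) = (⟨0, h0⟩ : Fin (m' + 1 + (r' + 1))) := by
    apply Fin.ext
    simp only [succ1_val, Fin.coe_natAdd, Fin.val_last]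
    have h : m' + 1 + r' + 1 = m' + 1 + (r' + 1) := by omega
    rw [h, Nat.mod_self]
  have B6 : Fin.natAdd (m' + 1) (succ1 (Fin.last r')) = (⟨m' + 1, hm1⟩ : Fin (m' + 1 + (r' + 1))) := by
    apply Fin.ext
    simp only [succ1_val, Fin.coe_natAdd, Fin.val_last, Nat.mod_self]
  have hfull : pairDist u v =
      (∑ i : Fin (m' + 1), if u (Fin.castAdd (r' + 1) i) ≠ v (Fin.castAdd (r' + 1) i) ∨
          u (succ1 (Fin.castAdd (r' + 1) i)) ≠ v (succ1 (Fin.castAdd (r' + 1) i)) then 1 else 0) +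
      ∑ i : Fin (r' + 1), if u (Fin.natAdd (m' + 1) i) ≠ v (Fin.natAdd (m' + 1) i) ∨
          u (succ1 (Fin.natAdd (m' + 1) i)) ≠ v (succ1 (Fin.natAdd (m' + 1) i)) then 1 else 0 := by
    rw [pairDist_eq]
    exact Fin.sum_univ_add _
  rw [hfull, pairDist_eq, pairDist_eq]
  simp only [Fin.sum_univ_castSucc, key1, key2, B1, B3, B4, B6]
  have main := four_ineq
    (u (Fin.castAdd (r' + 1) (Fin.last m')) ≠ v (Fin.castAdd (r' + 1) (Fin.last m')))
    (u ⟨m' + 1, hm1⟩ ≠ v ⟨m' + 1, hm1⟩)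
    (u (Fin.natAdd (m' + 1) (Fin.last r')) ≠ v (Fin.natAdd (m' + 1) (Fin.last r')))
    (u ⟨0, h0⟩ ≠ v ⟨0, h0⟩)
  omega
end

section
/- The difference d_p(u,v) − d_p(u^(1),v^(1)) − d_p(u^(2),v^(2)) equals d_H(ũ,ṽ) − d_H(û,v̂), where ũ = ((u_m,u_{m+1}),(u_{m+r},u_1)), û = ((u_m,u_1),(u_{m+r},u_{m+1})), and ṽ, v̂ are defined analogously from v. -/
/-- Hamming distance between two length-2 sequences of ordered symbol pairs. -/
def dH2 (a b : (ZMod 2 × ZMod 2) × (ZMod 2 × ZMod 2)) : ℕ :=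
  (if a.1 ≠ b.1 then 1 else 0) + (if a.2 ≠ b.2 then 1 else 0)

/-- Lengths are m+1 and r+1 (so m,r ≥ 1 in the paper'"'"'s 1-based notation:
paper u_1 = index 0, u_m = index m, u_{m+1} = index m+1, u_{m+r} = index m+r+1). -/
theorem stmt_2 (m r : ℕ) (u v : Fin (m + 1 + (r + 1)) → ZMod 2) :
    (pairDist u v : ℤ) -
        pairDist (fun i : Fin (m + 1) => u (Fin.castAdd (r + 1) i))
          (fun i : Fin (m + 1) => v (Fin.castAdd (r + 1) i)) -
        pairDist (fun i : Fin (r + 1) => u (Fin.natAdd (m + 1) i))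
          (fun i : Fin (r + 1) => v (Fin.natAdd (m + 1) i)) =
      (dH2 ((u ⟨m, by omega⟩, u ⟨m + 1, by omega⟩), (u ⟨m + r + 1, by omega⟩, u ⟨0, by omega⟩))
          ((v ⟨m, by omega⟩, v ⟨m + 1, by omega⟩), (v ⟨m + r + 1, by omega⟩, v ⟨0, by omega⟩)) : ℤ) -
        (dH2 ((u ⟨m, by omega⟩, u ⟨0, by omega⟩), (u ⟨m + r + 1, by omega⟩, u ⟨m + 1, by omega⟩))
          ((v ⟨m, by omega⟩, v ⟨0, by omega⟩), (v ⟨m + r + 1, by omega⟩, v ⟨m + 1, by omega⟩)) : ℤ) := by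
  classical
  have hpd : ∀ {n : ℕ} (x y : Fin n → ZMod 2), pairDist x y
      = ∑ i : Fin n, (if (x i, x (i + ⟨1 % n, Nat.mod_lt 1 i.pos⟩))
          ≠ (y i, y (i + ⟨1 % n, Nat.mod_lt 1 i.pos⟩)) then 1 else 0) := by
    intro n x y
    rw [pairDist, Finset.card_filter]
  rw [hpd, hpd, hpd, Fin.sum_univ_add, Fin.sum_univ_castSucc, Fin.sum_univ_castSucc,
    Fin.sum_univ_castSucc, Fin.sum_univ_castSucc]
  have hn : 1 % (m + 1 + (r + 1)) = 1 := Nat.mod_eq_of_lt (by omega)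
  have modlem : ∀ k : ℕ, (k + 1 % (k + 1)) % (k + 1) = 0 := by
    intro k
    cases k with
    | zero => rfl
    | succ k =>
      have e1 : 1 % (k + 1 + 1) = 1 := Nat.mod_eq_of_lt (by omega)
      have e2 : k + 1 + 1 % (k + 1 + 1) = k + 1 + 1 := by rw [e1]
      rw [e2, Nat.mod_self]
  have h1 : ∀ i : Fin m, Fin.castAdd (r+1) i.castSucc
      + (⟨1 % (m + 1 + (r + 1)), Nat.mod_lt 1 (by omega)⟩ : Fin (m + 1 + (r + 1)))
      = Fin.castAdd (r+1) (i.castSucc + ⟨1 % (m+1), Nat.mod_lt 1 (by omega)⟩) := by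
    intro i; have hi := i.isLt; apply Fin.ext
    have e1 : 1 % (m + 1) = 1 := Nat.mod_eq_of_lt (by omega)
    have e2 : (↑i + 1) % (m + 1 + (r + 1)) = ↑i + 1 := Nat.mod_eq_of_lt (by omega)
    have e3 : (↑i + 1) % (m + 1) = ↑i + 1 := Nat.mod_eq_of_lt (by omega)
    simp [Fin.add_def, hn, e1, e2, e3]
  have h2 : ∀ i : Fin r, Fin.natAdd (m+1) i.castSucc
      + (⟨1 % (m + 1 + (r + 1)), Nat.mod_lt 1 (by omega)⟩ : Fin (m + 1 + (r + 1)))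
      = Fin.natAdd (m+1) (i.castSucc + ⟨1 % (r+1), Nat.mod_lt 1 (by omega)⟩) := by
    intro i; have hi := i.isLt; apply Fin.ext
    have e1 : 1 % (r + 1) = 1 := Nat.mod_eq_of_lt (by omega)
    have e2 : (m + 1 + ↑i + 1) % (m + 1 + (r + 1)) = m + 1 + ↑i + 1 :=
      Nat.mod_eq_of_lt (by omega)
    have e3 : (↑i + 1) % (r + 1) = ↑i + 1 := Nat.mod_eq_of_lt (by omega)
    simp [Fin.add_def, hn, e1, e2, e3]
    omega
  have hA : Fin.castAdd (r+1) (Fin.last m) = (⟨m, by omega⟩ : Fin (m + 1 + (r + 1))) := by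
    apply Fin.ext; simp
  have hB : Fin.castAdd (r+1) (Fin.last m)
      + (⟨1 % (m + 1 + (r + 1)), Nat.mod_lt 1 (by omega)⟩ : Fin (m + 1 + (r + 1)))
      = (⟨m + 1, by omega⟩ : Fin (m + 1 + (r + 1))) := by
    apply Fin.ext
    have e2 : (m + 1) % (m + 1 + (r + 1)) = m + 1 := Nat.mod_eq_of_lt (by omega)
    simp [Fin.add_def, hn, e2]
  have hC : Fin.castAdd (r+1) (Fin.last m + ⟨1 % (m+1), Nat.mod_lt 1 (by omega)⟩)
      = (⟨0, by omega⟩ : Fin (m + 1 + (r + 1))) := by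
    apply Fin.ext; simp [Fin.add_def, modlem m]
  have hD : Fin.natAdd (m+1) (Fin.last r) = (⟨m + r + 1, by omega⟩ : Fin (m + 1 + (r + 1))) := by
    apply Fin.ext; simp; omega
  have hE : Fin.natAdd (m+1) (Fin.last r)
      + (⟨1 % (m + 1 + (r + 1)), Nat.mod_lt 1 (by omega)⟩ : Fin (m + 1 + (r + 1)))
      = (⟨0, by omega⟩ : Fin (m + 1 + (r + 1))) := by
    apply Fin.ext
    have e2 : m + 1 + r + 1 = m + 1 + (r + 1) := by omega
    simp [Fin.add_def, hn, e2, Nat.mod_self]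
  have hF : Fin.natAdd (m+1) (Fin.last r + ⟨1 % (r+1), Nat.mod_lt 1 (by omega)⟩)
      = (⟨m + 1, by omega⟩ : Fin (m + 1 + (r + 1))) := by
    apply Fin.ext; simp [Fin.add_def, modlem r]
  simp only [hB, hE]
  simp only [h1, h2, hA, hC, hD, hF, dH2]
  push_cast
  ring
end

section
/- For any function f : Z_2^k → Im(f) and enumeration u_1, ..., u_{2^k} of Z_2^k, the optimal redundancy satisfies N_p(D_f^{(1)}(t, u_1,...,u_{2^k})) ≤ r_p^f(k,t) ≤ N_p(D_f^{(2)}(t, u_1,...,u_{2^k})). -/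
open scoped Classical

/-- The optimal redundancy `r_p^f(k,t)` of a function-correcting symbol-pair code for `f`:
the smallest `r` admitting an encoding `u ↦ (u, p u)` such that codewords of messages with
distinct function values have pair distance at least `2t+1`. -/
noncomputable def rp {α : Type*} (k t : ℕ) (f : (Fin k → ZMod 2) → α) : ℕ :=
  sInf {r : ℕ | ∃ p : (Fin k → ZMod 2) → Fin r → ZMod 2,
    ∀ u v : Fin k → ZMod 2, f u ≠ f v →
      2 * t + 1 ≤ pairDist (Fin.append u (p u)) (Fin.append v (p v))}

/-- `N_p(D)`: smallest length `r` for which a `D`-irregular-pair-distance code exists. -/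
noncomputable def Np {M : ℕ} (D : Fin M → Fin M → ℕ) : ℕ :=
  sInf {r : ℕ | ∃ p : Fin M → Fin r → ZMod 2, ∀ i j, D i j ≤ pairDist (p i) (p j)}

/-- `N_p(M,D)`: smallest length admitting `M` vectors with pairwise pair distance ≥ `D`. -/
noncomputable def NpConst (M D : ℕ) : ℕ :=
  sInf {r : ℕ | ∃ p : Fin M → Fin r → ZMod 2,
    Function.Injective p ∧ ∀ i j, i ≠ j → D ≤ pairDist (p i) (p j)}

/-- The pair-distance matrix `D_f^{(1)}`. -/
noncomputable def Dmat1 {α : Type*} {k M : ℕ} (t : ℕ) (f : (Fin k → ZMod 2) → α)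
    (u : Fin M → Fin k → ZMod 2) : Fin M → Fin M → ℕ :=
  fun i j => if f (u i) ≠ f (u j) then 2 * t - pairDist (u i) (u j) else 0

/-- The pair-distance matrix `D_f^{(2)}`. -/
noncomputable def Dmat2 {α : Type*} {k M : ℕ} (t : ℕ) (f : (Fin k → ZMod 2) → α)
    (u : Fin M → Fin k → ZMod 2) : Fin M → Fin M → ℕ :=
  fun i j => if f (u i) ≠ f (u j) then 2 * t + 2 - pairDist (u i) (u j) else 0

def sd {n : ℕ} (i : Fin n) : Fin n := i + ⟨1 % n, Nat.mod_lt 1 i.pos⟩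

lemma sd_val {n : ℕ} (i : Fin n) : (sd i).val = (i.val + 1 % n) % n := by
  simp [sd, Fin.add_def]

noncomputable def icond {n : ℕ} (x y : Fin n → ZMod 2) (i : Fin n) : ℕ :=
  if x i ≠ y i ∨ x (sd i) ≠ y (sd i) then 1 else 0

lemma pairDist_eq_sum {n : ℕ} (x y : Fin n → ZMod 2) :
    pairDist x y = ∑ i : Fin n, icond x y i := by
  rw [pairDist, Finset.card_filter]
  refine Finset.sum_congr rfl fun i _ => ?_
  unfold icond
  refine if_congr ?_ rfl rfl
  simp only [sd, ne_eq, Prod.mk.injEq, not_and_or]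

lemma append_apply_lt {k r : ℕ} (x : Fin k → ZMod 2) (P : Fin r → ZMod 2)
    (j : Fin (k + r)) (h : j.val < k) : Fin.append x P j = x ⟨j.val, h⟩ := by
  have hj : j = Fin.castAdd r ⟨j.val, h⟩ := by apply Fin.ext; simp
  conv_lhs => rw [hj]
  exact Fin.append_left x P _

lemma append_apply_ge {k r : ℕ} (x : Fin k → ZMod 2) (P : Fin r → ZMod 2)
    (j : Fin (k + r)) (h : k ≤ j.val) :
    Fin.append x P j = P ⟨j.val - k, by have := j.isLt; omega⟩ := by
  have hj : j = Fin.natAdd k ⟨j.val - k, by have := j.isLt; omega⟩ := by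
    apply Fin.ext; simp; omega
  conv_lhs => rw [hj]
  exact Fin.append_right x P _

lemma succ_mod_eq {n : ℕ} (a : ℕ) (h2 : 2 ≤ n) (h : a + 1 < n) : (a + 1 % n) % n = a + 1 := by
  rw [Nat.mod_eq_of_lt (show 1 < n by omega), Nat.mod_eq_of_lt h]

lemma key {k r : ℕ} (hk : 0 < k) (x y : Fin k → ZMod 2) (P Q : Fin r → ZMod 2) :
    pairDist (Fin.append x P) (Fin.append y Q) ≤ pairDist x y + pairDist P Q + 1 ∧
    pairDist x y + pairDist P Q ≤ pairDist (Fin.append x P) (Fin.append y Q) + 1 := by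
  rcases Nat.eq_zero_or_pos r with hr | hr
  · subst hr
    have hP : pairDist P Q = 0 := by simp [pairDist]
    have h1 : Fin.append x P = x := funext fun i => by
      rw [append_apply_lt x P i (by have := i.isLt; omega)]
      exact congrArg x (Fin.ext rfl)
    have h2 : Fin.append y Q = y := funext fun i => by
      rw [append_apply_lt y Q i (by have := i.isLt; omega)]
      exact congrArg y (Fin.ext rfl)
    have hA : pairDist (Fin.append x P) (Fin.append y Q) = pairDist x y := by
      rw [h1, h2]
    rw [hA, hP]
    omega
  · have hn2 : 2 ≤ k + r := by omega
    set lk : Fin k := ⟨k - 1, by omega⟩ with hlk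
    set lr : Fin r := ⟨r - 1, by omega⟩ with hlr
    set z0 : Fin k := ⟨0, hk⟩ with hz0
    set p0 : Fin r := ⟨0, hr⟩ with hp0
    set A := Fin.append x P with hA
    set B := Fin.append y Q with hB
    -- sd computations
    have hsdlk : sd lk = z0 := by
      apply Fin.ext
      rw [sd_val]
      rcases k with _ | _ | m
      · omega
      · rfl
      · rw [Nat.mod_eq_of_lt (show 1 < m + 2 by omega)]
        show (m + 2 - 1 + 1) % (m + 2) = 0
        rw [show m + 2 - 1 + 1 = m + 2 by omega, Nat.mod_self]
    have hsdlr : sd lr = p0 := by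
      apply Fin.ext
      rw [sd_val]
      rcases r with _ | _ | m
      · omega
      · rfl
      · rw [Nat.mod_eq_of_lt (show 1 < m + 2 by omega)]
        show (m + 2 - 1 + 1) % (m + 2) = 0
        rw [show m + 2 - 1 + 1 = m + 2 by omega, Nat.mod_self]
    have hsd1 : sd (Fin.castAdd r lk) = Fin.natAdd k p0 := by
      apply Fin.ext
      rw [sd_val]
      simp only [Fin.coe_castAdd, Fin.coe_natAdd]
      rw [succ_mod_eq _ hn2 (by omega)]
      simp only [hlk, hp0, Fin.val_mk]
      omega
    have hsd2 : sd (Fin.natAdd k lr) = Fin.castAdd r z0 := by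
      apply Fin.ext
      rw [sd_val]
      simp only [Fin.coe_castAdd, Fin.coe_natAdd]
      rw [Nat.mod_eq_of_lt (show 1 < k + r by omega),
        show k + ↑lr + 1 = k + r by simp [hlr]; omega, Nat.mod_self]
    -- sums over non-boundary indices agree
    have hxsum : ∀ i ∈ Finset.univ.erase lk, icond A B (Fin.castAdd r i) = icond x y i := by
      intro i hi
      have h2 : i ≠ lk := Finset.ne_of_mem_erase hi
      have hik : i.val + 1 < k := by
        have h1 := i.isLt
        have : i.val ≠ k - 1 := fun hc => h2 (Fin.ext (by rw [hc]))
        omega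
      have hsd : sd (Fin.castAdd r i) = Fin.castAdd r (sd i) := by
        apply Fin.ext
        rw [sd_val]
        simp only [Fin.coe_castAdd]
        rw [sd_val, succ_mod_eq _ hn2 (by omega), succ_mod_eq _ (by omega) (by omega)]
      unfold icond
      rw [hA, hB, Fin.append_left, Fin.append_left, hsd, Fin.append_left, Fin.append_left]
    have hpsum : ∀ i ∈ Finset.univ.erase lr, icond A B (Fin.natAdd k i) = icond P Q i := by
      intro i hi
      have h2 : i ≠ lr := Finset.ne_of_mem_erase hi
      have hik : i.val + 1 < r := by
        have h1 := i.isLt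
        have : i.val ≠ r - 1 := fun hc => h2 (Fin.ext (by rw [hc]))
        omega
      have hsd : sd (Fin.natAdd k i) = Fin.natAdd k (sd i) := by
        apply Fin.ext
        rw [sd_val]
        simp only [Fin.coe_natAdd]
        rw [sd_val, succ_mod_eq _ hn2 (by omega), succ_mod_eq _ (by omega) (by omega)]
        omega
      unfold icond
      rw [hA, hB, Fin.append_right, Fin.append_right, hsd, Fin.append_right, Fin.append_right]
    -- the three decompositions
    have EA : pairDist A B =
        (∑ i ∈ Finset.univ.erase lk, icond x y i) + (∑ i ∈ Finset.univ.erase lr, icond P Q i)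
        + ((if x lk ≠ y lk ∨ P p0 ≠ Q p0 then 1 else 0)
          + (if P lr ≠ Q lr ∨ x z0 ≠ y z0 then 1 else 0)) := by
      rw [pairDist_eq_sum, Fin.sum_univ_add,
        ← Finset.sum_erase_add Finset.univ _ (Finset.mem_univ lk),
        ← Finset.sum_erase_add Finset.univ _ (Finset.mem_univ lr),
        Finset.sum_congr rfl hxsum, Finset.sum_congr rfl hpsum]
      have b1 : icond A B (Fin.castAdd r lk) = (if x lk ≠ y lk ∨ P p0 ≠ Q p0 then 1 else 0) := by
        unfold icond
        rw [hA, hB, Fin.append_left, Fin.append_left, hsd1, Fin.append_right, Fin.append_right]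
      have b2 : icond A B (Fin.natAdd k lr) = (if P lr ≠ Q lr ∨ x z0 ≠ y z0 then 1 else 0) := by
        unfold icond
        rw [hA, hB, Fin.append_right, Fin.append_right, hsd2, Fin.append_left, Fin.append_left]
      rw [b1, b2]
      ring
    have EX : pairDist x y =
        (∑ i ∈ Finset.univ.erase lk, icond x y i) + (if x lk ≠ y lk ∨ x z0 ≠ y z0 then 1 else 0) := by
      rw [pairDist_eq_sum, ← Finset.sum_erase_add Finset.univ _ (Finset.mem_univ lk)]
      congr 1
      unfold icond
      rw [hsdlk]
    have EP : pairDist P Q =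
        (∑ i ∈ Finset.univ.erase lr, icond P Q i) + (if P lr ≠ Q lr ∨ P p0 ≠ Q p0 then 1 else 0) := by
      rw [pairDist_eq_sum, ← Finset.sum_erase_add Finset.univ _ (Finset.mem_univ lr)]
      congr 1
      unfold icond
      rw [hsdlr]
    rw [EA, EX, EP]
    constructor <;>
    · by_cases h1 : x lk ≠ y lk <;> by_cases h2 : P p0 ≠ Q p0 <;>
        by_cases h3 : P lr ≠ Q lr <;> by_cases h4 : x z0 ≠ y z0 <;>
        simp [h1, h2, h3, h4] <;> omega

noncomputable def rep (k M : ℕ) (hk : 0 < k) (v : Fin k → ZMod 2) : Fin (k * M) → ZMod 2 :=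
  fun j => v ⟨j.val % k, Nat.mod_lt _ hk⟩

lemma rep_dist {k : ℕ} (M : ℕ) (hk : 0 < k) {v w : Fin k → ZMod 2} (hvw : v ≠ w) :
    M ≤ pairDist (rep k M hk v) (rep k M hk w) := by
  obtain ⟨c, hc⟩ := Function.ne_iff.mp hvw
  have hι : ∀ m : Fin M, c.val + m.val * k < k * M := by
    intro m
    have h1 : c.val < k := c.isLt
    have h2 : m.val + 1 ≤ M := m.isLt
    calc c.val + m.val * k < k + m.val * k := by omega
      _ = (m.val + 1) * k := by ring
      _ ≤ M * k := Nat.mul_le_mul_right k h2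
      _ = k * M := Nat.mul_comm M k
  rw [pairDist]
  refine le_trans (le_of_eq (Finset.card_fin M).symm)
    (Finset.card_le_card_of_injOn (fun m : Fin M => (⟨c.val + m.val * k, hι m⟩ : Fin (k * M))) ?_ ?_)
  · intro m _
    simp only [Finset.mem_coe, Finset.mem_filter, Finset.mem_univ, true_and]
    intro hcontra
    apply hc
    have := congrArg Prod.fst hcontra
    simpa [rep, Nat.add_mul_mod_self_right, Nat.mod_eq_of_lt c.isLt] using this
  · intro m1 _ m2 _ h
    have : c.val + m1.val * k = c.val + m2.val * k := congrArg Fin.val h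
    have hm : m1.val * k = m2.val * k := by omega
    exact Fin.ext (Nat.eq_of_mul_eq_mul_right hk hm)

lemma one_le_pairDist {k : ℕ} {v w : Fin k → ZMod 2} (hvw : v ≠ w) :
    1 ≤ pairDist v w := by
  obtain ⟨c, hc⟩ := Function.ne_iff.mp hvw
  rw [pairDist]
  refine Finset.card_pos.mpr ⟨c, Finset.mem_filter.mpr ⟨Finset.mem_univ c,
    fun h => hc (congrArg Prod.fst h)⟩⟩


theorem stmt_4 {α : Type*} (k t : ℕ) (f : (Fin k → ZMod 2) → α)
    (u : Fin (2 ^ k) → Fin k → ZMod 2) (hu : Function.Bijective u) :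
    Np (Dmat1 t f u) ≤ rp k t f ∧ rp k t f ≤ Np (Dmat2 t f u) := by
  rcases Nat.eq_zero_or_pos k with hk | hk
  · subst hk
    have hconst : ∀ v w : Fin 0 → ZMod 2, f v = f w := fun v w =>
      congrArg f (funext fun i => i.elim0)
    constructor
    · refine le_trans (Nat.sInf_le ?_) (Nat.zero_le _)
      exact ⟨fun _ => Fin.elim0, fun i j => by
        simp only [Dmat1, ne_eq, hconst (u i) (u j), not_true_eq_false, if_false]
        exact Nat.zero_le _⟩
    · refine le_trans (Nat.sInf_le ?_) (Nat.zero_le _)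
      exact ⟨fun _ => Fin.elim0, fun v w hvw => absurd (hconst v w) hvw⟩
  · set e := Equiv.ofBijective u hu with he
    constructor
    · -- Np D1 ≤ rp
      have hrpne : {r : ℕ | ∃ p : (Fin k → ZMod 2) → Fin r → ZMod 2,
          ∀ v w : Fin k → ZMod 2, f v ≠ f w →
            2 * t + 1 ≤ pairDist (Fin.append v (p v)) (Fin.append w (p w))}.Nonempty := by
        refine ⟨k * (2 * t + 1), fun v => rep k (2 * t + 1) hk v, fun v w hvw => ?_⟩
        have hne : v ≠ w := fun h => hvw (congrArg f h)
        have h1 := one_le_pairDist hne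
        have h2 := rep_dist (2 * t + 1) hk hne
        have h3 := (key hk v w (rep k (2 * t + 1) hk v) (rep k (2 * t + 1) hk w)).2
        beta_reduce
        omega
      have hmem : rp k t f ∈ {r : ℕ | ∃ p : (Fin k → ZMod 2) → Fin r → ZMod 2,
          ∀ v w : Fin k → ZMod 2, f v ≠ f w →
            2 * t + 1 ≤ pairDist (Fin.append v (p v)) (Fin.append w (p w))} :=
        Nat.sInf_mem hrpne
      obtain ⟨p, hp⟩ := hmem
      refine Nat.sInf_le ⟨fun i => p (u i), fun i j => ?_⟩
      by_cases hf : f (u i) ≠ f (u j)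
      · have h1 := hp (u i) (u j) hf
        have h2 := (key hk (u i) (u j) (p (u i)) (p (u j))).1
        simp only [Dmat1, if_pos hf]
        omega
      · simp only [Dmat1, if_neg hf]
        exact Nat.zero_le _
    · -- rp ≤ Np D2
      have hNpne : {r : ℕ | ∃ p : Fin (2 ^ k) → Fin r → ZMod 2,
          ∀ i j, Dmat2 t f u i j ≤ pairDist (p i) (p j)}.Nonempty := by
        refine ⟨k * (2 * t + 2), fun i => rep k (2 * t + 2) hk (u i), fun i j => ?_⟩
        by_cases hf : f (u i) ≠ f (u j)
        · have hne : u i ≠ u j := fun h => hf (congrArg f h)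
          have h2 := rep_dist (2 * t + 2) hk hne
          simp only [Dmat2, if_pos hf]
          omega
        · simp only [Dmat2, if_neg hf]
          exact Nat.zero_le _
      have hmem : Np (Dmat2 t f u) ∈ {r : ℕ | ∃ p : Fin (2 ^ k) → Fin r → ZMod 2,
          ∀ i j, Dmat2 t f u i j ≤ pairDist (p i) (p j)} := Nat.sInf_mem hNpne
      obtain ⟨c, hc⟩ := hmem
      refine Nat.sInf_le ⟨fun v => c (e.symm v), fun v w hvw => ?_⟩
      have hv : u (e.symm v) = v := e.apply_symm_apply v
      have hw : u (e.symm w) = w := e.apply_symm_apply w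
      have hD := hc (e.symm v) (e.symm w)
      simp only [Dmat2, hv, hw, if_pos hvw] at hD
      have h1 := one_le_pairDist (fun h : v = w => hvw (congrArg f h))
      have h2 := (key hk v w (c (e.symm v)) (c (e.symm w))).2
      beta_reduce
      omega
end

section
/- For any function f : Z_2^k → Im(f) with |Im(f)| ≥ 2 and t ≥ 1, the optimal redundancy satisfies r_p^f(k,t) ≥ 2t − 2. -/
open scoped Classical

lemma exists_edge {α : Type*} {k : ℕ} (f : (Fin k → ZMod 2) → α)
    (hf : ∃ u v, f u ≠ f v) :
    ∃ (u : Fin k → ZMod 2) (j : Fin k), f u ≠ f (Function.update u j (u j + 1)) := by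
  by_contra hcon
  push_neg at hcon
  obtain ⟨u, v, huv⟩ := hf
  apply huv
  have key : ∀ (n : ℕ) (u : Fin k → ZMod 2),
      (Finset.univ.filter fun i => u i ≠ v i).card = n → f u = f v := by
    intro n
    induction n with
    | zero =>
      intro u hcard
      have : u = v := by
        funext i
        by_contra hi
        have : i ∈ Finset.univ.filter fun i => u i ≠ v i := by simp [hi]
        simp [Finset.card_eq_zero] at hcard
        exact absurd (@hcard i) hi
      rw [this]
    | succ n ih =>
      intro u hcard
      have hne : (Finset.univ.filter fun i => u i ≠ v i).Nonempty := by
        rw [← Finset.card_pos, hcard]; omega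
      obtain ⟨j, hj⟩ := hne
      simp only [Finset.mem_filter, Finset.mem_univ, true_and] at hj
      have hvj : v j = u j + 1 := by
        have : ∀ a b : ZMod 2, a ≠ b → b = a + 1 := by decide
        exact this _ _ hj
      set u' := Function.update u j (u j + 1) with hu'
      have h1 : f u = f u' := hcon u j
      have h2 : f u' = f v := by
        apply ih
        have : (Finset.univ.filter fun i => u' i ≠ v i)
            = (Finset.univ.filter fun i => u i ≠ v i).erase j := by
          ext i
          simp only [Finset.mem_filter, Finset.mem_univ, true_and, Finset.mem_erase]
          by_cases hij : i = j
          · subst hij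
            simp [hu', Function.update_self, hvj]
          · simp [hu', Function.update_of_ne hij, hij]
        rw [this, Finset.card_erase_of_mem (by simp [hj]), hcard]
        omega
      rw [h1, h2]
  exact key _ u rfl

lemma app_val {k r : ℕ} (u : Fin k → ZMod 2) (w : Fin r → ZMod 2) (m : ℕ) (h : m < k + r) :
    Fin.append u w ⟨m, h⟩ = if h' : m < k then u ⟨m, h'⟩ else w ⟨m - k, by omega⟩ := by
  unfold Fin.append Fin.addCases
  split <;> simp_all [Fin.castLT, Fin.subNat]

-- pairDist lower bound by positions with differing first coordinate
lemma pairDist_ge {n : ℕ} (x y : Fin n → ZMod 2) (S : Finset (Fin n))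
    (hS : ∀ i ∈ S, x i ≠ y i) : S.card ≤ pairDist x y := by
  apply Finset.card_le_card
  intro i hi
  simp only [Finset.mem_filter, Finset.mem_univ, true_and]
  intro hpair
  exact hS i hi (congrArg Prod.fst hpair)

lemma rp_set_nonempty {α : Type*} {k : ℕ} (t : ℕ) (hk : 0 < k) (f : (Fin k → ZMod 2) → α) :
    ∃ p : (Fin k → ZMod 2) → Fin (2*t*k) → ZMod 2,
    ∀ u v : Fin k → ZMod 2, f u ≠ f v →
      2 * t + 1 ≤ pairDist (Fin.append u (p u)) (Fin.append v (p v)) := by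
  refine ⟨fun u i => u ⟨i.1 % k, Nat.mod_lt _ hk⟩, ?_⟩
  intro u v huv
  have huv' : u ≠ v := fun h => huv (by rw [h])
  have : ∃ j, u j ≠ v j := by
    by_contra h
    push_neg at h
    exact huv' (funext h)
  obtain ⟨j, hj⟩ := this
  -- the positions m*k + j, m = 0..2t
  have hval : ∀ (w : Fin k → ZMod 2) (m : ℕ) (h : m*k + j.1 < k + 2*t*k),
      Fin.append w (fun i : Fin (2*t*k) => w ⟨i.1 % k, Nat.mod_lt _ hk⟩) ⟨m*k + j.1, h⟩ = w j := by
    intro w m h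
    rw [app_val]
    split
    · rename_i h'
      have hm : m = 0 := by
        by_contra hm0
        have : k ≤ m * k := Nat.le_mul_of_pos_left k (by omega)
        omega
      subst hm
      congr 1
      exact Fin.ext (by simp)
    · congr 1
      apply Fin.ext
      show (m*k + j.1 - k) % k = j.1
      rename_i h'
      have hm1 : 1 ≤ m := by
        by_contra hm0
        have : m = 0 := by omega
        subst this
        exact h' (by simpa using j.isLt)
      have : m*k + j.1 - k = j.1 + (m-1)*k := by
        have : k ≤ m * k := Nat.le_mul_of_pos_left k (by omega)
        have h2 : m * k = (m-1)*k + k := by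
          rw [Nat.sub_mul]; omega
        omega
      rw [this, Nat.add_mul_mod_self_right, Nat.mod_eq_of_lt j.isLt]
  have hn : 0 < k + 2*t*k := by omega
  set n := k + 2*t*k with hndef
  set g : ℕ → Fin n := fun m => ⟨(m*k + j.1) % n, Nat.mod_lt _ hn⟩ with hg
  have hgval : ∀ m ∈ Finset.range (2*t+1), (g m).1 = m*k + j.1 := by
    intro m hm
    simp only [Finset.mem_range] at hm
    have h1 : m*k ≤ 2*t*k := Nat.mul_le_mul_right k (by omega)
    exact Nat.mod_eq_of_lt (by omega)
  rw [show (2:ℕ)*t+1 = (Finset.range (2*t+1)).card from (Finset.card_range _).symm]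
  apply Finset.card_le_card_of_injOn g
  · intro m hm
    simp only [Finset.mem_coe, Finset.mem_filter, Finset.mem_univ, true_and] at hm ⊢
    intro hpair
    apply hj
    have hlt : m*k + j.1 < k + 2*t*k := by
      have := hgval m hm
      have := (g m).2
      omega
    have hgm : g m = (⟨m*k + j.1, hlt⟩ : Fin n) := Fin.ext (hgval m hm)
    have h1 := congrArg Prod.fst hpair
    simp only at h1
    rw [hgm, hval u m hlt, hval v m hlt] at h1
    exact h1
  · intro m1 hm1 m2 hm2 heq
    simp only [Finset.coe_range, Set.mem_Iio] at hm1 hm2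
    have e1 := hgval m1 (Finset.mem_range.2 hm1)
    have e2 := hgval m2 (Finset.mem_range.2 hm2)
    have : m1 * k = m2 * k := by
      have := congrArg Fin.val heq
      omega
    exact Nat.eq_of_mul_eq_mul_right hk this

lemma rp_lb {α : Type*} {k t r : ℕ} (f : (Fin k → ZMod 2) → α)
    (u : Fin k → ZMod 2) (j : Fin k)
    (hedge : f u ≠ f (Function.update u j (u j + 1)))
    (p : (Fin k → ZMod 2) → Fin r → ZMod 2)
    (hp : ∀ u v, f u ≠ f v → 2*t+1 ≤ pairDist (Fin.append u (p u)) (Fin.append v (p v))) :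
    2*t - 2 ≤ r := by
  have hk : 0 < k := j.pos
  set v := Function.update u j (u j + 1) with hv
  set n := k + r with hn
  have hn1 : 0 < n := by omega
  set x := Fin.append u (p u) with hx
  set y := Fin.append v (p v) with hy
  have hdiff : ∀ m : Fin n, x m ≠ y m → m.1 = j.1 ∨ k ≤ m.1 := by
    intro m hm
    by_contra hcon
    push_neg at hcon
    obtain ⟨hmj, hmk⟩ := hcon
    apply hm
    have hxm : x m = u ⟨m.1, hmk⟩ := by
      show Fin.append u (p u) ⟨m.1, m.2⟩ = _
      rw [app_val]; simp [hmk]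
    have hym : y m = v ⟨m.1, hmk⟩ := by
      show Fin.append v (p v) ⟨m.1, m.2⟩ = _
      rw [app_val]; simp [hmk]
    rw [hxm, hym, hv]
    exact (Function.update_of_ne
      (fun h : (⟨m.1, hmk⟩ : Fin k) = j => hmj (congrArg Fin.val h)) _ u).symm
  set W : Finset ℕ := insert j.1 (insert ((j.1 + (n-1)) % n) (Finset.Ico (k-1) n)) with hW
  have key : pairDist x y ≤ W.card := by
    unfold pairDist
    apply Finset.card_le_card_of_injOn Fin.val ?_ Fin.val_injective.injOn
    intro i hi
    simp only [Finset.mem_coe, Finset.mem_filter, Finset.mem_univ, true_and] at hi ⊢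
    set q := i + (⟨1 % n, Nat.mod_lt 1 i.pos⟩ : Fin n) with hq
    have hqval : q.1 = (i.1 + 1) % n := by
      rw [hq, Fin.val_add]
      conv_lhs => rw [Nat.add_mod]
      conv_rhs => rw [Nat.add_mod]
      rw [Nat.mod_mod_of_dvd 1 dvd_rfl]
    have hor : x i ≠ y i ∨ x q ≠ y q := by
      by_contra h
      push_neg at h
      exact hi (by rw [h.1, h.2])
    rcases hor with h | h
    · rcases hdiff i h with hji | hki
      · simp [hW, hji]
      · simp only [hW, Finset.mem_insert, Finset.mem_Ico]
        right; right; omega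
    · rcases hdiff q h with hji | hki
      · rw [hqval] at hji
        have hiv : i.1 = (j.1 + (n-1)) % n := by
          rcases Nat.lt_or_ge (i.1+1) n with h1 | h1
          · have hj1 : j.1 = i.1 + 1 := by rw [← hji, Nat.mod_eq_of_lt h1]
            have h2 : j.1 + (n-1) = i.1 + n := by omega
            rw [h2, Nat.add_mod_right, Nat.mod_eq_of_lt i.2]
          · have h2 : i.1 + 1 = n := by have := i.2; omega
            have hj0 : j.1 = 0 := by rw [← hji, h2, Nat.mod_self]
            rw [hj0, Nat.zero_add, Nat.mod_eq_of_lt (by omega)]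
            omega
        simp [hW, hiv]
      · rw [hqval] at hki
        rcases Nat.lt_or_ge (i.1+1) n with h1 | h1
        · rw [Nat.mod_eq_of_lt h1] at hki
          simp only [hW, Finset.mem_insert, Finset.mem_Ico]
          right; right
          exact ⟨by omega, i.2⟩
        · have h2 : i.1 + 1 = n := by have := i.2; omega
          rw [h2, Nat.mod_self] at hki
          omega
  have hWcard : W.card ≤ (n - (k-1)) + 2 := by
    calc W.card ≤ (insert ((j.1 + (n-1)) % n) (Finset.Ico (k-1) n)).card + 1 :=
          Finset.card_insert_le _ _
      _ ≤ ((Finset.Ico (k-1) n).card + 1) + 1 := by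
          have := Finset.card_insert_le ((j.1 + (n-1)) % n) (Finset.Ico (k-1) n)
          omega
      _ = (n - (k-1)) + 2 := by rw [Nat.card_Ico]
  have hdist := hp u v hedge
  rw [← hx, ← hy] at hdist
  omega

theorem stmt_7 {α : Type*} (k t : ℕ) (ht : 1 ≤ t) (f : (Fin k → ZMod 2) → α)
    (hf : ∃ u v : Fin k → ZMod 2, f u ≠ f v) :
    2 * t - 2 ≤ rp k t f := by
  obtain ⟨u0, j0, hedge⟩ := exists_edge f hf
  have hk : 0 < k := j0.pos
  unfold rp
  have hne : {r : ℕ | ∃ p : (Fin k → ZMod 2) → Fin r → ZMod 2,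
      ∀ u v : Fin k → ZMod 2, f u ≠ f v →
        2 * t + 1 ≤ pairDist (Fin.append u (p u)) (Fin.append v (p v))}.Nonempty :=
    ⟨2*t*k, rp_set_nonempty t hk f⟩
  obtain ⟨p, hp⟩ := Nat.sInf_mem hne
  exact rp_lb f u0 j0 hedge p hp
end

section
/- (Plotkin-type bound for irregular pair distances) Let D ∈ N_0^{M×M} be a distance matrix (symmetric with zero diagonal). Then N_p(D) ≥ (8 / (3M²)) · Σ_{i<j} [D]_{ij} when M ≡ 0 (mod 4); N_p(D) ≥ (8 / (3(M²−1))) · Σ_{i<j} [D]_{ij} when M is odd; and N_p(D) ≥ (8 / (3M²−4)) · Σ_{i<j} [D]_{ij} when M ≡ 2 (mod 4). -/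
open scoped Classical

lemma pairDist_comm {n : ℕ} (x y : Fin n → ZMod 2) : pairDist x y = pairDist y x := by
  unfold pairDist
  congr 1
  apply Finset.filter_congr
  intro i _
  exact ne_comm

lemma pairDist_self {n : ℕ} (x : Fin n → ZMod 2) : pairDist x x = 0 := by
  simp [pairDist]

lemma hamming_le_pairDist {n : ℕ} (x y : Fin n → ZMod 2) :
    (Finset.univ.filter fun c : Fin n => x c ≠ y c).card ≤ pairDist x y := by
  unfold pairDist
  apply Finset.card_le_card
  intro c hc
  simp only [Finset.mem_filter, Finset.mem_univ, true_and] at hc ⊢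
  exact fun h => hc (congrArg Prod.fst h)

lemma np_set_nonempty {M : ℕ} (D : Fin M → Fin M → ℕ) (hdiag : ∀ i, D i i = 0) :
    {r : ℕ | ∃ p : Fin M → Fin r → ZMod 2, ∀ i j, D i j ≤ pairDist (p i) (p j)}.Nonempty := by
  set d := ∑ i : Fin M, ∑ j : Fin M, D i j with hd
  have hDle : ∀ i j, D i j ≤ d := by
    intro i j
    calc D i j ≤ ∑ j', D i j' :=
          Finset.single_le_sum (fun _ _ => Nat.zero_le _) (Finset.mem_univ j)
      _ ≤ d := Finset.single_le_sum (f := fun i => ∑ j', D i j')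
          (fun _ _ => Nat.zero_le _) (Finset.mem_univ i)
  have key : ∀ a b : Fin M, a.val < b.val →
      d ≤ pairDist (fun c : Fin (M*d) => if c.val < (a.val+1)*d then (1:ZMod 2) else 0)
        (fun c : Fin (M*d) => if c.val < (b.val+1)*d then (1:ZMod 2) else 0) := by
    intro a b hab
    refine le_trans ?_ (hamming_le_pairDist _ _)
    have hlt : ∀ k : Fin d, (a.val+1)*d + k.val < M*d := by
      intro k
      have h1 : (a.val+1)*d + k.val < (a.val+2)*d := by
        have : (a.val+2)*d = (a.val+1)*d + d := by ring
        omega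
      have h2 : (a.val+2)*d ≤ M*d := Nat.mul_le_mul_right d (by have := b.isLt; omega)
      omega
    have hcard : d = (Finset.univ : Finset (Fin d)).card := by simp
    conv_lhs => rw [hcard]
    apply Finset.card_le_card_of_injOn (fun k : Fin d => (⟨(a.val+1)*d + k.val, hlt k⟩ : Fin (M*d)))
    · intro k _
      simp only [Finset.mem_coe, Finset.mem_filter, Finset.mem_univ, true_and]
      have hc1 : ¬ ((a.val+1)*d + k.val < (a.val+1)*d) := by omega
      have hc2 : (a.val+1)*d + k.val < (b.val+1)*d := by
        have h1 : (a.val+2)*d ≤ (b.val+1)*d := Nat.mul_le_mul_right d (by omega)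
        have : (a.val+2)*d = (a.val+1)*d + d := by ring
        have := k.isLt
        omega
      rw [if_neg hc1, if_pos hc2]
      exact zero_ne_one
    · intro k _ k' _ h
      have := congrArg Fin.val h
      simp only at this
      exact Fin.ext (by omega)
  refine ⟨M * d, fun i => fun c => if c.val < (i.val+1)*d then 1 else 0, ?_⟩
  intro i j
  rcases lt_trichotomy i.val j.val with h | h | h
  · exact le_trans (hDle i j) (key i j h)
  · have : i = j := Fin.ext h
    subst this
    simp [hdiag]
  · rw [pairDist_comm]
    exact le_trans (hDle i j) (key j i h)

section Fiber
variable {β : Type*} [Fintype β] [DecidableEq β] {M : ℕ}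

noncomputable def fib (g : Fin M → β) (b : β) : ℕ :=
  (Finset.univ.filter fun i => g i = b).card

lemma sum_fib (g : Fin M → β) : ∑ b : β, fib g b = M := by
  have := Finset.card_eq_sum_card_fiberwise
    (s := (Finset.univ : Finset (Fin M))) (t := (Finset.univ : Finset β))
    (f := g) (fun x _ => Finset.mem_univ (g x))
  simpa [fib] using this.symm

lemma sum_eq_pairs (g : Fin M → β) :
    (∑ i : Fin M, ∑ j : Fin M, if g i = g j then 1 else 0) = ∑ b : β, (fib g b)^2 := by
  have h1 : ∀ i, (∑ j : Fin M, if g i = g j then (1:ℕ) else 0) = fib g (g i) := by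
    intro i
    rw [fib, Finset.card_filter]
    exact Finset.sum_congr rfl fun j _ => by simp [eq_comm]
  have h2 : ∀ i, fib g (g i) = ∑ b : β, if g i = b then fib g b else 0 := by
    intro i
    rw [Finset.sum_ite_eq Finset.univ (g i) (fib g)]
    simp
  calc (∑ i : Fin M, ∑ j : Fin M, if g i = g j then (1:ℕ) else 0)
      = ∑ i : Fin M, ∑ b : β, if g i = b then fib g b else 0 := by
        exact Finset.sum_congr rfl fun i _ => by rw [h1, h2]
    _ = ∑ b : β, ∑ i : Fin M, if g i = b then fib g b else 0 := Finset.sum_comm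
    _ = ∑ b : β, (fib g b)^2 := by
        refine Finset.sum_congr rfl fun b _ => ?_
        rw [← Finset.sum_filter, Finset.sum_const, smul_eq_mul, ← fib, sq]

lemma pairs_split (g : Fin M → β) :
    (∑ i : Fin M, ∑ j : Fin M, if g i ≠ g j then 1 else 0) + ∑ b : β, (fib g b)^2 = M^2 := by
  rw [← sum_eq_pairs g, ← Finset.sum_add_distrib]
  have : ∀ i : Fin M, ((∑ j : Fin M, if g i ≠ g j then (1:ℕ) else 0)
      + ∑ j : Fin M, if g i = g j then 1 else 0) = M := by
    intro i
    rw [← Finset.sum_add_distrib]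
    have : ∀ j : Fin M, ((if g i ≠ g j then (1:ℕ) else 0) + if g i = g j then 1 else 0) = 1 := by
      intro j
      by_cases h : g i = g j <;> simp [h]
    rw [Finset.sum_congr rfl fun j _ => this j]
    simp
  rw [Finset.sum_congr rfl fun i _ => this i]
  simp [sq]

lemma cs_bound (hcard : Fintype.card β = 4) (g : Fin M → β) :
    M^2 ≤ 4 * ∑ b : β, (fib g b)^2 := by
  have h := sq_sum_le_card_mul_sum_sq (α := ℤ) (s := (Finset.univ : Finset β))
    (f := fun b => (fib g b : ℤ))
  rw [Finset.card_univ, hcard] at h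
  have hs : (∑ b : β, (fib g b : ℤ)) = (M : ℤ) := by
    rw [← Nat.cast_sum, sum_fib]
  rw [hs] at h
  exact_mod_cast h

lemma parity_bound (g : Fin M → β) :
    (∑ b : β, (fib g b)^2) % 2 = M % 2 := by
  conv_rhs => rw [← sum_fib g]
  rw [Finset.sum_nat_mod, Finset.sum_nat_mod (Finset.univ) 2 (fib g)]
  congr 1
  refine Finset.sum_congr rfl fun b _ => ?_
  rcases Nat.even_or_odd (fib g b) with h | h
  · obtain ⟨c, hc⟩ := h
    have : (fib g b)^2 = 2*(2*c*c) := by rw [hc]; ring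
    omega
  · obtain ⟨c, hc⟩ := h
    have : (fib g b)^2 = 2*(2*c*c+2*c) + 1 := by rw [hc]; ring
    omega

lemma coord_bound (hcard : Fintype.card β = 4) (g : Fin M → β) (t : ℕ)
    (ht : (M % 4 = 0 ∧ t = 0) ∨ (M % 2 = 1 ∧ t = 3) ∨ (M % 4 = 2 ∧ t = 4)) :
    4 * (∑ i : Fin M, ∑ j : Fin M, if g i ≠ g j then 1 else 0) + t ≤ 3 * M^2 := by
  have hEQ := pairs_split g
  have hcs := cs_bound hcard g
  have hpar := parity_bound g
  set E := ∑ i : Fin M, ∑ j : Fin M, if g i ≠ g j then (1:ℕ) else 0 with hE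
  set Q := ∑ b : β, (fib g b)^2 with hQ
  rcases ht with ⟨h4, rfl⟩ | ⟨h2, rfl⟩ | ⟨h4, rfl⟩
  · obtain ⟨k, hk⟩ : ∃ k, M^2 = k := ⟨_, rfl⟩
    rw [hk] at hEQ hcs ⊢
    omega
  · have hsq : M^2 % 4 = 1 := by
      obtain ⟨a, ha⟩ : ∃ a, M = 2*a+1 := ⟨M/2, by omega⟩
      have : M^2 = 4*(a*a+a)+1 := by rw [ha]; ring
      omega
    obtain ⟨k, hk⟩ : ∃ k, M^2 = k := ⟨_, rfl⟩
    rw [hk] at hEQ hcs hsq ⊢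
    omega
  · have hsq : M^2 % 8 = 4 := by
      obtain ⟨a, ha⟩ : ∃ a, M = 4*a+2 := ⟨M/4, by omega⟩
      have : M^2 = 8*(2*a*a+2*a)+4 := by rw [ha]; ring
      omega
    have hQpar : Q % 2 = 0 := by omega
    obtain ⟨k, hk⟩ : ∃ k, M^2 = k := ⟨_, rfl⟩
    rw [hk] at hEQ hcs hsq ⊢
    omega

end Fiber

lemma main_bound {M r : ℕ} (p : Fin M → Fin r → ZMod 2) (t : ℕ)
    (ht : (M % 4 = 0 ∧ t = 0) ∨ (M % 2 = 1 ∧ t = 3) ∨ (M % 4 = 2 ∧ t = 4)) :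
    4 * (∑ i : Fin M, ∑ j : Fin M, pairDist (p i) (p j)) + t * r ≤ 3 * M^2 * r := by
  set G : Fin r → Fin M → ZMod 2 × ZMod 2 :=
    fun c i => (p i c, p i (c + ⟨1 % r, Nat.mod_lt 1 c.pos⟩)) with hG
  have hdist : ∀ a b : Fin M,
      pairDist (p a) (p b) = ∑ c : Fin r, if G c a ≠ G c b then 1 else 0 := by
    intro a b
    rw [pairDist, Finset.card_filter]
  have hswap : (∑ i : Fin M, ∑ j : Fin M, pairDist (p i) (p j))
      = ∑ c : Fin r, ∑ i : Fin M, ∑ j : Fin M, (if G c i ≠ G c j then 1 else 0) := by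
    rw [Finset.sum_congr rfl fun i _ => Finset.sum_congr rfl fun j _ => hdist i j]
    rw [Finset.sum_congr rfl fun i (_ : i ∈ Finset.univ) => Finset.sum_comm]
    exact Finset.sum_comm
  rw [hswap, Finset.mul_sum]
  have hcard : Fintype.card (ZMod 2 × ZMod 2) = 4 := by simp
  calc (∑ c : Fin r, 4 * ∑ i : Fin M, ∑ j : Fin M, (if G c i ≠ G c j then 1 else 0)) + t * r
      = ∑ c : Fin r, (4 * (∑ i : Fin M, ∑ j : Fin M, (if G c i ≠ G c j then 1 else 0)) + t) := by
        rw [Finset.sum_add_distrib, Finset.sum_const, Finset.card_univ, Fintype.card_fin,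
          smul_eq_mul, mul_comm]
    _ ≤ ∑ c : Fin r, 3 * M^2 := Finset.sum_le_sum fun c _ => coord_bound hcard (G c) t ht
    _ = 3 * M^2 * r := by rw [Finset.sum_const, Finset.card_univ, Fintype.card_fin,
          smul_eq_mul, mul_comm]

lemma triangle {M : ℕ} (f : Fin M → Fin M → ℕ) (hsym : ∀ i j, f i j = f j i)
    (hd : ∀ i, f i i = 0) :
    2 * (∑ i : Fin M, ∑ j : Fin M, if i < j then f i j else 0)
      = ∑ i : Fin M, ∑ j : Fin M, f i j := by
  have hpt : ∀ i j : Fin M,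
      f i j = (if i < j then f i j else 0) + (if j < i then f i j else 0) := by
    intro i j
    rcases lt_trichotomy i j with h | h | h
    · simp [h, asymm h]
    · subst h; simp [hd]
    · simp [h, asymm h, not_lt_of_gt h]
  have h2 : (∑ i : Fin M, ∑ j : Fin M, f i j)
      = (∑ i : Fin M, ∑ j : Fin M, if i < j then f i j else 0)
        + (∑ i : Fin M, ∑ j : Fin M, if j < i then f i j else 0) := by
    rw [← Finset.sum_add_distrib]
    refine Finset.sum_congr rfl fun i _ => ?_
    rw [← Finset.sum_add_distrib]
    exact Finset.sum_congr rfl fun j _ => hpt i j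
  have h3 : (∑ i : Fin M, ∑ j : Fin M, if j < i then f i j else 0)
      = ∑ i : Fin M, ∑ j : Fin M, if i < j then f i j else 0 := by
    rw [Finset.sum_comm]
    exact Finset.sum_congr rfl fun i _ => Finset.sum_congr rfl fun j _ => by rw [hsym]
  rw [h2, h3]
  ring

theorem stmt_9 (M : ℕ) (D : Fin M → Fin M → ℕ)
    (hsymm : ∀ i j, D i j = D j i) (hdiag : ∀ i, D i i = 0) :
    (M % 4 = 0 →
      8 * (∑ i : Fin M, ∑ j : Fin M, if i < j then D i j else 0) ≤ 3 * M ^ 2 * Np D) ∧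
    (M % 2 = 1 →
      8 * (∑ i : Fin M, ∑ j : Fin M, if i < j then D i j else 0) ≤ 3 * (M ^ 2 - 1) * Np D) ∧
    (M % 4 = 2 →
      8 * (∑ i : Fin M, ∑ j : Fin M, if i < j then D i j else 0) ≤ (3 * M ^ 2 - 4) * Np D) := by
  obtain ⟨p, hp⟩ : Np D ∈ {r : ℕ | ∃ p : Fin M → Fin r → ZMod 2,
      ∀ i j, D i j ≤ pairDist (p i) (p j)} :=
    Nat.sInf_mem (np_set_nonempty D hdiag)
  set SD := ∑ i : Fin M, ∑ j : Fin M, if i < j then D i j else 0 with hSD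
  set S := ∑ i : Fin M, ∑ j : Fin M, if i < j then pairDist (p i) (p j) else 0 with hS
  have hSDS : SD ≤ S := by
    refine Finset.sum_le_sum fun i _ => Finset.sum_le_sum fun j _ => ?_
    by_cases h : i < j
    · simpa [h] using hp i j
    · simp [h]
  have htri : 2 * S = ∑ i : Fin M, ∑ j : Fin M, pairDist (p i) (p j) :=
    triangle _ (fun i j => pairDist_comm (p i) (p j)) (fun i => pairDist_self (p i))
  have key : ∀ t : ℕ, ((M % 4 = 0 ∧ t = 0) ∨ (M % 2 = 1 ∧ t = 3) ∨ (M % 4 = 2 ∧ t = 4)) →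
      8 * SD + t * Np D ≤ 3 * M^2 * Np D := by
    intro t ht
    have h1 := main_bound p t ht
    have h2 : 8 * S = 4 * (∑ i : Fin M, ∑ j : Fin M, pairDist (p i) (p j)) := by
      rw [← htri]; ring
    have h3 : 8 * SD ≤ 8 * S := by omega
    omega
  refine ⟨?_, ?_, ?_⟩
  · intro h4
    have := key 0 (Or.inl ⟨h4, rfl⟩)
    omega
  · intro h2
    have hk := key 3 (Or.inr (Or.inl ⟨h2, rfl⟩))
    have hM1 : 1 ≤ M^2 := by
      simpa using Nat.pow_le_pow_left (show 1 ≤ M by omega) 2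
    obtain ⟨m, hm⟩ : ∃ m, M^2 = m + 1 := ⟨M^2 - 1, by omega⟩
    have hgoal : 3 * (M^2 - 1) * Np D = 3 * m * Np D := by rw [hm]; simp
    rw [hgoal]
    rw [hm] at hk
    have hexp : 3 * (m + 1) * Np D = 3 * m * Np D + 3 * Np D := by ring
    linarith
  · intro h4
    have hk := key 4 (Or.inr (Or.inr ⟨h4, rfl⟩))
    have hM2 : 4 ≤ M^2 := by
      have : 2^2 ≤ M^2 := Nat.pow_le_pow_left (show 2 ≤ M by omega) 2
      omega
    obtain ⟨m, hm⟩ : ∃ m, 3 * M^2 = m + 4 := ⟨3 * M^2 - 4, by omega⟩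
    have hgoal : (3 * M^2 - 4) * Np D = m * Np D := by rw [hm]; simp
    rw [hgoal]
    rw [show 3 * M^2 * Np D = (m + 4) * Np D by rw [hm]] at hk
    have hexp : (m + 4) * Np D = m * Np D + 4 * Np D := by ring
    linarith
end

section
/- (Plotkin bound for symbol-pair codes) For all M ≥ 2 and D ≥ 1, N_p(M, D) ≥ (4(M−1)/(3M)) · D. -/
open scoped Classical

-- Hamming distance lower-bounds pair distance
lemma ham_le_pair {n : ℕ} (x y : Fin n → ZMod 2) :
    (Finset.univ.filter fun i : Fin n => x i ≠ y i).card ≤ pairDist x y := by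
  apply Finset.card_le_card
  intro i hi
  simp only [Finset.mem_filter, Finset.mem_univ, true_and] at hi ⊢
  intro h
  exact hi (congrArg Prod.fst h)

-- key counting lemma
lemma key_s10 {M r D : ℕ} (hM : 2 ≤ M) (p : Fin M → Fin r → ZMod 2)
    (hd : ∀ i j, i ≠ j → D ≤ pairDist (p i) (p j)) :
    4 * (M - 1) * D ≤ 3 * M * r := by
  have hMpos : 0 < M := by omega
  set q : Fin r → Fin M → ZMod 2 × ZMod 2 :=
    fun i a => (p a i, p a (i + ⟨1 % r, Nat.mod_lt 1 i.pos⟩)) with hq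
  set S : ℕ := ∑ a : Fin M, ∑ b : Fin M, pairDist (p a) (p b) with hS
  -- lower bound
  have h1 : M * ((M - 1) * D) ≤ S := by
    have : ∀ a : Fin M, (M - 1) * D ≤ ∑ b : Fin M, pairDist (p a) (p b) := by
      intro a
      calc (M - 1) * D = ∑ b ∈ Finset.univ.erase a, D := by
            rw [Finset.sum_const, Finset.card_erase_of_mem (Finset.mem_univ a)]
            simp [Finset.card_univ, smul_eq_mul]
        _ ≤ ∑ b ∈ Finset.univ.erase a, pairDist (p a) (p b) := by
            apply Finset.sum_le_sum
            intro b hb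
            exact hd a b (fun h => (Finset.mem_erase.mp hb).1 h.symm)
        _ ≤ ∑ b : Fin M, pairDist (p a) (p b) :=
            Finset.sum_le_sum_of_subset (Finset.erase_subset _ _)
    calc M * ((M - 1) * D) = ∑ _a : Fin M, (M - 1) * D := by
          simp [Finset.sum_const, Finset.card_univ, mul_comm]
      _ ≤ S := Finset.sum_le_sum fun a _ => this a
  -- rewrite S as sum over columns
  have h2 : S = ∑ i : Fin r, ∑ a : Fin M, ∑ b : Fin M,
      (if q i a ≠ q i b then 1 else 0) := by
    rw [hS]
    have : ∀ a b : Fin M, pairDist (p a) (p b)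
        = ∑ i : Fin r, (if q i a ≠ q i b then 1 else 0) := by
      intro a b
      rw [pairDist, Finset.card_filter]
    simp_rw [this]
    calc (∑ a : Fin M, ∑ b : Fin M, ∑ i : Fin r, (if q i a ≠ q i b then 1 else 0))
        = ∑ a : Fin M, ∑ i : Fin r, ∑ b : Fin M, (if q i a ≠ q i b then 1 else 0) :=
          Finset.sum_congr rfl fun a _ => Finset.sum_comm
      _ = ∑ i : Fin r, ∑ a : Fin M, ∑ b : Fin M, (if q i a ≠ q i b then 1 else 0) :=
          Finset.sum_comm
  -- per-column bound
  have h3 : ∀ i : Fin r, 4 * (∑ a : Fin M, ∑ b : Fin M,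
      (if q i a ≠ q i b then 1 else 0)) ≤ 3 * (M * M) := by
    intro i
    set c : ZMod 2 × ZMod 2 → ℕ :=
      fun v => (Finset.univ.filter fun a : Fin M => q i a = v).card with hc
    have hsum : ∑ v : ZMod 2 × ZMod 2, c v = M := by
      have h := (Finset.card_eq_sum_card_fiberwise
        (t := (Finset.univ : Finset (ZMod 2 × ZMod 2))) (f := q i)
        (fun a (_ : a ∈ (Finset.univ : Finset (Fin M))) => Finset.mem_univ (q i a)))
      rw [Finset.card_univ, Fintype.card_fin] at h
      exact h.symm
    set E : ℕ := ∑ a : Fin M, ∑ b : Fin M, (if q i a = q i b then 1 else 0) with hE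
    have hEeq : E = ∑ v : ZMod 2 × ZMod 2, c v * c v := by
      have h1 : E = ∑ a : Fin M, c (q i a) := by
        rw [hE]
        refine Finset.sum_congr rfl fun a _ => ?_
        simp only [hc, Finset.card_filter]
        exact Finset.sum_congr rfl fun b _ => if_congr ⟨Eq.symm, Eq.symm⟩ rfl rfl
      rw [h1, ← Finset.sum_fiberwise_of_maps_to (g := q i)
        (fun a _ => Finset.mem_univ (q i a)) (fun a => c (q i a))]
      congr 1
      ext v
      rw [Finset.sum_congr rfl (fun a ha => by
        rw [(Finset.mem_filter.mp ha).2]), Finset.sum_const, smul_eq_mul, mul_comm]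
    have hTE : (∑ a : Fin M, ∑ b : Fin M, (if q i a ≠ q i b then 1 else 0)) + E
        = M * M := by
      have hpoint : ∀ a b : Fin M, ((if q i a ≠ q i b then 1 else 0)
          + if q i a = q i b then 1 else 0) = 1 := by
        intro a b; by_cases h : q i a = q i b <;> simp [h]
      rw [hE, ← Finset.sum_add_distrib]
      simp_rw [← Finset.sum_add_distrib, hpoint]
      simp [Finset.sum_const, Finset.card_univ, mul_comm]
    have hCS : M * M ≤ 4 * E := by
      have := sq_sum_le_card_mul_sum_sq (s := (Finset.univ : Finset (ZMod 2 × ZMod 2)))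
        (f := fun v => (c v : ℤ))
      have hcard : ((Finset.univ : Finset (ZMod 2 × ZMod 2)).card : ℤ) = 4 := by decide
      rw [hcard] at this
      have h2 : ((M : ℤ)) ^ 2 ≤ 4 * ∑ v : ZMod 2 × ZMod 2, (c v : ℤ) ^ 2 := by
        calc ((M : ℤ)) ^ 2 = (∑ v : ZMod 2 × ZMod 2, (c v : ℤ)) ^ 2 := by
              rw [← hsum]; push_cast; ring
          _ ≤ _ := this
      have h3 : (E : ℤ) = ∑ v : ZMod 2 × ZMod 2, (c v : ℤ) ^ 2 := by
        rw [hEeq]; push_cast; simp [sq]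
      have : ((M : ℤ)) * M ≤ 4 * E := by rw [h3]; nlinarith [h2]
      exact_mod_cast this
    omega
  -- combine
  have h4 : M * (4 * ((M - 1) * D)) ≤ M * (3 * M * r) := by
    calc M * (4 * ((M - 1) * D)) = 4 * (M * ((M - 1) * D)) := by ring
      _ ≤ 4 * S := by omega
      _ = ∑ i : Fin r, 4 * (∑ a : Fin M, ∑ b : Fin M,
            (if q i a ≠ q i b then 1 else 0)) := by
          rw [h2, Finset.mul_sum]
      _ ≤ ∑ _i : Fin r, 3 * (M * M) := Finset.sum_le_sum fun i _ => h3 i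
      _ = M * (3 * M * r) := by
          simp [Finset.sum_const, Finset.card_univ]; ring
  have := Nat.le_of_mul_le_mul_left h4 hMpos
  calc 4 * (M - 1) * D = 4 * ((M - 1) * D) := by ring
    _ ≤ 3 * M * r := this

lemma exists_code (M D : ℕ) (hD : 1 ≤ D) :
    ∃ p : Fin M → Fin (M * D) → ZMod 2,
      Function.Injective p ∧ ∀ i j, i ≠ j → D ≤ pairDist (p i) (p j) := by
  set p : Fin M → Fin (M * D) → ZMod 2 :=
    fun a i => if i.val / D = a.val then 1 else 0 with hp
  have hdist : ∀ a b : Fin M, a ≠ b → D ≤ pairDist (p a) (p b) := by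
    intro a b hab
    refine le_trans ?_ (ham_le_pair _ _)
    have hf : ∀ j : Fin D, a.val * D + j.val < M * D := by
      intro j
      have h1 : a.val * D + j.val < a.val * D + D := by omega
      have h2 : a.val * D + D ≤ M * D := by
        have h3 : (a.val + 1) * D ≤ M * D := Nat.mul_le_mul_right D (by omega)
        calc a.val * D + D = (a.val + 1) * D := by ring
          _ ≤ M * D := h3
      exact lt_of_lt_of_le h1 h2
    set f : Fin D → Fin (M * D) := fun j => ⟨a.val * D + j.val, hf j⟩ with hfdef
    have hquot : ∀ j : Fin D, (a.val * D + j.val) / D = a.val := by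
      intro j
      rw [Nat.add_comm, Nat.add_mul_div_right _ _ (by omega : 0 < D),
        Nat.div_eq_of_lt j.isLt, Nat.zero_add]
    have hmaps : ∀ j : Fin D,
        f j ∈ Finset.univ.filter fun i : Fin (M * D) => p a i ≠ p b i := by
      intro j
      simp only [Finset.mem_filter, Finset.mem_univ, true_and, hfdef, hp]
      have hne : ¬ (a.val * D + j.val) / D = b.val := by
        rw [hquot j]
        exact fun h => hab (Fin.ext h)
      rw [if_pos (hquot j), if_neg hne]
      decide
    have hinjf : Set.InjOn f (Finset.univ : Finset (Fin D)) := by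
      intro j1 _ j2 _ h
      have : a.val * D + j1.val = a.val * D + j2.val := congrArg Fin.val h
      exact Fin.ext (by omega)
    calc D = (Finset.univ : Finset (Fin D)).card := (Finset.card_fin D).symm
      _ ≤ _ := Finset.card_le_card_of_injOn f (fun j _ => hmaps j) hinjf
  have hself : ∀ a : Fin M, pairDist (p a) (p a) = 0 := by
    intro a; simp [pairDist]
  refine ⟨p, ?_, hdist⟩
  intro a b h
  by_contra hne
  have hle := hdist a b hne
  rw [h, hself b] at hle
  omega

theorem stmt_10 (M D : ℕ) (hM : 2 ≤ M) (hD : 1 ≤ D) :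
    4 * (M - 1) * D ≤ 3 * M * NpConst M D := by
  obtain ⟨p0, hinj0, hdist0⟩ := exists_code M D hD
  have hne : {r : ℕ | ∃ p : Fin M → Fin r → ZMod 2,
      Function.Injective p ∧ ∀ i j, i ≠ j → D ≤ pairDist (p i) (p j)}.Nonempty :=
    ⟨M * D, p0, hinj0, hdist0⟩
  have hmem : ∃ p : Fin M → Fin (NpConst M D) → ZMod 2,
      Function.Injective p ∧ ∀ i j, i ≠ j → D ≤ pairDist (p i) (p j) :=
    Nat.sInf_mem hne
  obtain ⟨p, _, hdistp⟩ := hmem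
  exact key_s10 hM p hdistp
end

section
/- (Gilbert–Varshamov-type bound for irregular pair distance) For any distance matrix D ∈ N_0^{M×M} and any permutation π of [M], N_p(D) ≤ min{ r ∈ N : 2^r > max_{j∈[M]} Σ_{i=1}^{j−1} B(r, [D]_{π(i)π(j)} − 1) }, where B(r,d) is the number of words in Z_2^r at pair distance at most d from a fixed word. -/
open scoped Classical

/-- `B(r,d)`: the number of words of `Z_2^r` at pair distance at most `d` from a fixed word
(here the all-zeros word; the count is independent of the centre). The bound `d` is an
integer so that `d = -1` gives an empty ball. -/
noncomputable def ballPair (r : ℕ) (d : ℤ) : ℕ :=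
  (Finset.univ.filter fun y : Fin r → ZMod 2 =>
    (pairDist (fun _ => 0) y : ℤ) ≤ d).card

lemma pairDist_sub {n : ℕ} (x y : Fin n → ZMod 2) :
    pairDist x y = pairDist (fun _ => 0) (y - x) := by
  unfold pairDist
  congr 1
  apply Finset.filter_congr
  intro i _
  have key : ∀ a b c d : ZMod 2,
      ((a, c) ≠ (b, d) ↔ (((0:ZMod 2), (0:ZMod 2)) ≠ (b - a, d - c))) := by decide
  exact key _ _ _ _

lemma card_ball {r : ℕ} (x : Fin r → ZMod 2) (d : ℤ) :
    (Finset.univ.filter fun y : Fin r → ZMod 2 => (pairDist x y : ℤ) ≤ d).card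
      = ballPair r d := by
  unfold ballPair
  apply Finset.card_bij' (fun y _ => y - x) (fun z _ => z + x)
  · intro y hy
    simp only [Finset.mem_filter, Finset.mem_univ, true_and] at hy ⊢
    rwa [← pairDist_sub]
  · intro z hz
    simp only [Finset.mem_filter, Finset.mem_univ, true_and] at hz ⊢
    rwa [pairDist_sub, add_sub_cancel_right]
  · intro y _; simp
  · intro z _; simp

lemma ballPair_mono (r : ℕ) {d₁ d₂ : ℤ} (h : d₁ ≤ d₂) : ballPair r d₁ ≤ ballPair r d₂ := by
  apply Finset.card_le_card
  intro y hy
  simp only [Finset.mem_filter, Finset.mem_univ, true_and] at *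
  exact le_trans hy h

lemma card_words (r : ℕ) : Fintype.card (Fin r → ZMod 2) = 2 ^ r := by
  simp [Fintype.card_fun]

lemma greedy {r M : ℕ} (D' : Fin M → Fin M → ℕ)
    (h : ∀ j : Fin M,
      (∑ i ∈ Finset.univ.filter (fun i : Fin M => i < j),
        ballPair r ((D' i j : ℤ) - 1)) < 2 ^ r) :
    ∃ q : Fin M → Fin r → ZMod 2, ∀ i j, i < j → D' i j ≤ pairDist (q i) (q j) := by
  suffices H : ∀ m : ℕ, ∃ q : Fin M → Fin r → ZMod 2,
      ∀ i j : Fin M, i < j → (j : ℕ) < m → D' i j ≤ pairDist (q i) (q j) by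
    obtain ⟨q, hq⟩ := H M
    exact ⟨q, fun i j hij => hq i j hij j.isLt⟩
  intro m
  induction m with
  | zero => exact ⟨fun _ _ => 0, fun i j _ hj => absurd hj (Nat.not_lt_zero _)⟩
  | succ m ih =>
    obtain ⟨q, hq⟩ := ih
    by_cases hm : M ≤ m
    · exact ⟨q, fun i j hij _ => hq i j hij (lt_of_lt_of_le j.isLt hm)⟩
    push_neg at hm
    set j : Fin M := ⟨m, hm⟩ with hjdef
    have hjv : (j : ℕ) = m := rfl
    set bad : Finset (Fin r → ZMod 2) :=
      (Finset.univ.filter (fun i : Fin M => i < j)).biUnion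
        (fun i => Finset.univ.filter fun y : Fin r → ZMod 2 =>
          (pairDist (q i) y : ℤ) ≤ (D' i j : ℤ) - 1) with hbad
    have hcard : bad.card < 2 ^ r := by
      calc bad.card ≤ ∑ i ∈ Finset.univ.filter (fun i : Fin M => i < j),
            (Finset.univ.filter fun y : Fin r → ZMod 2 =>
              (pairDist (q i) y : ℤ) ≤ (D' i j : ℤ) - 1).card := Finset.card_biUnion_le
        _ = ∑ i ∈ Finset.univ.filter (fun i : Fin M => i < j),
            ballPair r ((D' i j : ℤ) - 1) := by
              exact Finset.sum_congr rfl fun i _ => card_ball (q i) _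
        _ < 2 ^ r := h j
    have hex : ∃ w : Fin r → ZMod 2, w ∉ bad := by
      by_contra hc
      push_neg at hc
      have : (Finset.univ : Finset (Fin r → ZMod 2)) ⊆ bad := fun w _ => hc w
      have := Finset.card_le_card this
      rw [Finset.card_univ, card_words] at this
      omega
    obtain ⟨w, hw⟩ := hex
    refine ⟨Function.update q j w, fun i j' hij' hj' => ?_⟩
    rcases Nat.lt_or_ge (j' : ℕ) m with hj'm | hj'm
    · have hj'ne : j' ≠ j := by
        intro hc; rw [hc] at hj'm; exact absurd hj'm (lt_irrefl _)
      have hine : i ≠ j := by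
        intro hc
        have : (i : ℕ) < (j' : ℕ) := hij'
        rw [hc] at this
        omega
      rw [Function.update_of_ne hj'ne, Function.update_of_ne hine]
      exact hq i j' hij' hj'm
    · have hj'eq : j' = j := by
        apply Fin.ext
        omega
      rw [hj'eq] at hij' ⊢
      have hine : i ≠ j := ne_of_lt hij'
      rw [Function.update_self, Function.update_of_ne hine]
      have : w ∉ Finset.univ.filter fun y : Fin r → ZMod 2 =>
          (pairDist (q i) y : ℤ) ≤ (D' i j : ℤ) - 1 := by
        intro hc
        apply hw
        rw [hbad]
        apply Finset.mem_biUnion.mpr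
        exact ⟨i, Finset.mem_filter.mpr ⟨Finset.mem_univ _, hij'⟩, hc⟩
      simp only [Finset.mem_filter, Finset.mem_univ, true_and, not_le] at this
      omega

lemma ballPair_le_poly (r d : ℕ) : ballPair r (d : ℤ) ≤ (d + 1) * (r + 1) ^ d := by
  have two : ∀ a : ZMod 2, a = 0 ∨ a = 1 := by decide
  have support_card_le : ∀ y : Fin r → ZMod 2,
      (Finset.univ.filter fun i => y i ≠ 0).card ≤ pairDist (fun _ => 0) y := by
    intro y
    apply Finset.card_le_card
    intro i hi
    simp only [Finset.mem_filter, Finset.mem_univ, true_and] at hi ⊢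
    simp only [ne_eq, Prod.mk.injEq, not_and_or]
    exact Or.inl fun hc => hi hc.symm
  have step1 : ballPair r (d : ℤ) ≤
      (Finset.univ.filter fun s : Finset (Fin r) => s.card ≤ d).card := by
    unfold ballPair
    apply Finset.card_le_card_of_injOn (fun y => Finset.univ.filter fun i => y i ≠ 0)
    · intro y hy
      simp only [Finset.mem_coe, Finset.mem_filter, Finset.mem_univ, true_and] at hy ⊢
      have hy' : pairDist (fun _ => 0) y ≤ d := by exact_mod_cast hy
      exact le_trans (support_card_le y) hy'
    · intro y1 _ y2 _ hsupp
      funext i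
      have hm : (i ∈ Finset.univ.filter fun j => y1 j ≠ 0) ↔
          (i ∈ Finset.univ.filter fun j => y2 j ≠ 0) := Finset.ext_iff.mp hsupp i
      simp only [Finset.mem_filter, Finset.mem_univ, true_and] at hm
      rcases two (y1 i) with h1 | h1 <;> rcases two (y2 i) with h2 | h2 <;> simp_all
  have step2 : (Finset.univ.filter fun s : Finset (Fin r) => s.card ≤ d).card
      ≤ ∑ k ∈ Finset.range (d + 1), Nat.choose r k := by
    have hsub : (Finset.univ.filter fun s : Finset (Fin r) => s.card ≤ d)
        ⊆ (Finset.range (d + 1)).biUnion (fun k => Finset.powersetCard k Finset.univ) := by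
      intro s hs
      simp only [Finset.mem_filter, Finset.mem_univ, true_and] at hs
      exact Finset.mem_biUnion.mpr ⟨s.card, Finset.mem_range.mpr (Nat.lt_succ_of_le hs),
        Finset.mem_powersetCard.mpr ⟨Finset.subset_univ s, rfl⟩⟩
    calc _ ≤ _ := Finset.card_le_card hsub
      _ ≤ ∑ k ∈ Finset.range (d + 1),
            (Finset.powersetCard k (Finset.univ : Finset (Fin r))).card :=
          Finset.card_biUnion_le
      _ = ∑ k ∈ Finset.range (d + 1), Nat.choose r k := by
          refine Finset.sum_congr rfl fun k _ => ?_
          rw [Finset.card_powersetCard, Finset.card_univ, Fintype.card_fin]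
  have step3 : ∑ k ∈ Finset.range (d + 1), Nat.choose r k ≤ (d + 1) * (r + 1) ^ d := by
    calc _ ≤ ∑ _k ∈ Finset.range (d + 1), (r + 1) ^ d := by
          apply Finset.sum_le_sum
          intro k hk
          calc Nat.choose r k ≤ r ^ k := Nat.choose_le_pow r k
            _ ≤ (r + 1) ^ k := Nat.pow_le_pow_left (Nat.le_succ r) k
            _ ≤ (r + 1) ^ d := Nat.pow_le_pow_right (Nat.succ_le_succ (Nat.zero_le r))
                (Nat.lt_succ_iff.mp (Finset.mem_range.mp hk))
      _ = (d + 1) * (r + 1) ^ d := by rw [Finset.sum_const, Finset.card_range, smul_eq_mul]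
  exact le_trans step1 (le_trans step2 step3)

lemma exists_small (C d : ℕ) : ∃ r : ℕ, C * (r + 1) ^ d < 2 ^ r := by
  have h := isLittleO_pow_const_const_pow_of_one_lt (R := ℝ) d (by norm_num : (1:ℝ) < 2)
  have heps : (0:ℝ) < 1 / (2 * (C + 1)) := by positivity
  obtain ⟨N, hN⟩ := Filter.eventually_atTop.mp (h.def heps)
  refine ⟨N, ?_⟩
  have hb := hN (N + 1) (Nat.le_succ N)
  rw [Real.norm_eq_abs, Real.norm_eq_abs, abs_of_nonneg (by positivity),
    abs_of_nonneg (by positivity)] at hb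
  have h2 : (2:ℝ) ^ (N + 1) = 2 * 2 ^ N := by rw [pow_succ]; ring
  rw [h2] at hb
  -- hb : ((N+1 : ℕ):ℝ) ^ d ≤ 1 / (2 * (C + 1)) * (2 * 2 ^ N)
  have hres : (C:ℝ) * ((N:ℝ) + 1) ^ d < 2 ^ N := by
    have hb' : ((N:ℝ) + 1) ^ d ≤ 2 ^ N / ((C:ℝ) + 1) := by
      have e : 1 / (2 * ((C:ℝ) + 1)) * (2 * 2 ^ N) = 2 ^ N / ((C:ℝ) + 1) := by
        field_simp
      rw [e] at hb
      exact_mod_cast hb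
    have hC1 : (0:ℝ) < (C:ℝ) + 1 := by positivity
    have hp : (0:ℝ) < 2 ^ N := by positivity
    calc (C:ℝ) * ((N:ℝ) + 1) ^ d ≤ (C:ℝ) * (2 ^ N / ((C:ℝ) + 1)) :=
          mul_le_mul_of_nonneg_left hb' (by positivity)
      _ < 2 ^ N := by
          rw [mul_div_assoc', div_lt_iff₀ hC1]
          nlinarith
  have := hres
  push_cast at this
  exact_mod_cast hres

theorem stmt_11 (M : ℕ) (D : Fin M → Fin M → ℕ)
    (hsymm : ∀ i j, D i j = D j i) (hdiag : ∀ i, D i i = 0)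
    (π : Equiv.Perm (Fin M)) :
    Np D ≤ sInf {r : ℕ |
      2 ^ r > Finset.univ.sup fun j : Fin M =>
        ∑ i ∈ Finset.univ.filter (fun i : Fin M => i < j),
          ballPair r ((D (π i) (π j) : ℤ) - 1)} := by
  set S := {r : ℕ |
      2 ^ r > Finset.univ.sup fun j : Fin M =>
        ∑ i ∈ Finset.univ.filter (fun i : Fin M => i < j),
          ballPair r ((D (π i) (π j) : ℤ) - 1)} with hS
  have key : ∀ r ∈ S, ∃ p : Fin M → Fin r → ZMod 2,
      ∀ i j, D i j ≤ pairDist (p i) (p j) := by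
    intro r hr
    rw [hS, Set.mem_setOf_eq, gt_iff_lt] at hr
    have hsum : ∀ j : Fin M,
        (∑ i ∈ Finset.univ.filter (fun i : Fin M => i < j),
          ballPair r ((D (π i) (π j) : ℤ) - 1)) < 2 ^ r := fun j =>
      lt_of_le_of_lt (Finset.le_sup (f := fun j : Fin M =>
        ∑ i ∈ Finset.univ.filter (fun i : Fin M => i < j),
          ballPair r ((D (π i) (π j) : ℤ) - 1)) (Finset.mem_univ j)) hr
    obtain ⟨q, hq⟩ := greedy (fun i j => D (π i) (π j)) hsum
    refine ⟨fun i => q (π.symm i), fun i j => ?_⟩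
    rcases lt_trichotomy (π.symm i) (π.symm j) with h | h | h
    · have := hq _ _ h
      simpa using this
    · have hij : i = j := by
        have := congrArg π h
        simpa using this
      subst hij
      rw [hdiag]
      exact Nat.zero_le _
    · have := hq _ _ h
      simp only [Equiv.apply_symm_apply] at this
      rw [show ((fun i => q (π.symm i)) i) = q (π.symm i) from rfl,
        show ((fun i => q (π.symm i)) j) = q (π.symm j) from rfl,
        pairDist_comm, hsymm]
      exact this
  have hne : S.Nonempty := by
    set dmax : ℕ := Finset.univ.sup (fun pq : Fin M × Fin M => D pq.1 pq.2) with hdm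
    obtain ⟨r, hr⟩ := exists_small (M * (dmax + 1)) dmax
    refine ⟨r, ?_⟩
    rw [hS, Set.mem_setOf_eq, gt_iff_lt]
    rw [Finset.sup_lt_iff (by simp)]
    intro j _
    calc ∑ i ∈ Finset.univ.filter (fun i : Fin M => i < j),
            ballPair r ((D (π i) (π j) : ℤ) - 1)
        ≤ ∑ _i ∈ Finset.univ.filter (fun i : Fin M => i < j), ballPair r (dmax : ℤ) := by
          apply Finset.sum_le_sum
          intro i _
          apply ballPair_mono
          have : D (π i) (π j) ≤ dmax :=
            Finset.le_sup (f := fun pq : Fin M × Fin M => D pq.1 pq.2)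
              (Finset.mem_univ (π i, π j))
          push_cast
          omega
      _ ≤ M * ballPair r (dmax : ℤ) := by
          rw [Finset.sum_const, smul_eq_mul]
          apply Nat.mul_le_mul_right
          exact le_trans (Finset.card_filter_le _ _) (by simp)
      _ ≤ M * ((dmax + 1) * (r + 1) ^ dmax) :=
          Nat.mul_le_mul_left _ (ballPair_le_poly r dmax)
      _ = M * (dmax + 1) * (r + 1) ^ dmax := by ring
      _ < 2 ^ r := hr
  obtain ⟨p, hp⟩ := key _ (Nat.sInf_mem hne)
  exact Nat.sInf_le ⟨p, hp⟩
end

section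
/- If 2 ≤ ρ ≤ k−1 and f : Z_2^k → Im(f) is a (ρ−1)-locally binary function (i.e., |{f(u') : d_H(u,u') ≤ ρ−1}| ≤ 2 for all u), then f is a ρ-pair-locally binary function (i.e., |{f(u') : d_p(u,u') ≤ ρ}| ≤ 2 for all u). -/
open scoped Classical

open Fin.NatCast in
lemma closure_lemma {n : ℕ} [NeZero n] (S : Finset (Fin n))
    (hcl : ∀ i ∈ S, i + 1 ∈ S) (hne : S.Nonempty) : S = Finset.univ := by
  obtain ⟨j, hj⟩ := hne
  have key : ∀ m : ℕ, j + (m : Fin n) ∈ S := by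
    intro m
    induction m with
    | zero => simpa using hj
    | succ m ih =>
        have : ((m + 1 : ℕ) : Fin n) = (m : Fin n) + 1 := by push_cast; ring
        rw [this, ← add_assoc]
        exact hcl _ ih
  apply Finset.eq_univ_of_forall
  intro i
  have := key ((i - j).val)
  rwa [Fin.cast_val_eq_self, add_sub_cancel] at this

lemma one_eq {n : ℕ} [NeZero n] (h : 1 % n < n) :
    (⟨1 % n, h⟩ : Fin n) = 1 := by
  apply Fin.ext
  simp [Fin.val_one']

lemma pairDist_eq_s15 {n : ℕ} [NeZero n] (x y : Fin n → ZMod 2) :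
    pairDist x y = (Finset.univ.filter fun i : Fin n =>
      (x i, x (i + 1)) ≠ (y i, y (i + 1))).card := by
  simp only [pairDist, one_eq]

lemma hd_subset {n : ℕ} [NeZero n] (x y : Fin n → ZMod 2) :
    (Finset.univ.filter fun i : Fin n => x i ≠ y i) ⊆
    (Finset.univ.filter fun i : Fin n =>
      (x i, x (i + 1)) ≠ (y i, y (i + 1))) := by
  intro i hi
  simp only [Finset.mem_filter, Finset.mem_univ, true_and] at *
  intro h
  exact hi (congrArg Prod.fst h)

lemma hd_le_pd {n : ℕ} [NeZero n] (x y : Fin n → ZMod 2) :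
    hammingDist x y ≤ pairDist x y := by
  rw [pairDist_eq_s15]
  exact Finset.card_le_card (hd_subset x y)

lemma hd_lt_pd {n : ℕ} [NeZero n] (x y : Fin n → ZMod 2)
    (h0 : hammingDist x y ≠ 0) (hn : hammingDist x y ≠ n) :
    hammingDist x y < pairDist x y := by
  rw [pairDist_eq_s15]
  set S := (Finset.univ.filter fun i : Fin n => x i ≠ y i) with hS
  set T := (Finset.univ.filter fun i : Fin n =>
      (x i, x (i + 1)) ≠ (y i, y (i + 1))) with hT
  have hST : S ⊆ T := hd_subset x y
  have hScard : S.card = hammingDist x y := by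
    simp [hammingDist, hS]
  have : ∃ i, i ∉ S ∧ i + 1 ∈ S := by
    by_contra hc
    push_neg at hc
    have hcl : ∀ i ∈ Sᶜ, i + 1 ∈ Sᶜ := by
      intro i hi
      rw [Finset.mem_compl] at hi ⊢
      exact hc i hi
    have hne : Sᶜ.Nonempty := by
      have hle := Finset.card_le_univ S
      rw [Fintype.card_fin] at hle
      rw [← Finset.card_pos, Finset.card_compl, Fintype.card_fin]
      omega
    have := closure_lemma Sᶜ hcl hne
    have hSe : S = ∅ := by
      have := congrArg (·ᶜ) this
      simpa using this
    rw [hSe, Finset.card_empty] at hScard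
    exact h0 hScard.symm
  obtain ⟨i, hiS, hi1⟩ := this
  have hiT : i ∈ T := by
    simp only [hT, Finset.mem_filter, Finset.mem_univ, true_and]
    intro h
    have := congrArg Prod.snd h
    simp only [hS, Finset.mem_filter, Finset.mem_univ, true_and] at hi1
    exact hi1 this
  have hss : S ⊂ T := ⟨hST, fun hts => hiS (hts hiT)⟩
  exact hScard ▸ Finset.card_lt_card hss

theorem stmt_15 {α : Type*} (k ρ : ℕ) (hρ1 : 2 ≤ ρ) (hρ2 : ρ ≤ k - 1)
    (f : (Fin k → ZMod 2) → α)
    (hloc : ∀ u : Fin k → ZMod 2,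
      ((Finset.univ.filter fun u' : Fin k → ZMod 2 => hammingDist u u' ≤ ρ - 1).image f).card ≤ 2) :
    ∀ u : Fin k → ZMod 2,
      ((Finset.univ.filter fun u' : Fin k → ZMod 2 => pairDist u u' ≤ ρ).image f).card ≤ 2 := by
  have hk : 3 ≤ k := by omega
  haveI : NeZero k := ⟨by omega⟩
  intro u
  refine le_trans (Finset.card_le_card (Finset.image_subset_image ?_)) (hloc u)
  intro u' hu'
  simp only [Finset.mem_filter, Finset.mem_univ, true_and] at hu' ⊢
  rcases eq_or_ne (hammingDist u u') 0 with h0 | h0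
  · omega
  rcases eq_or_ne (hammingDist u u') k with hn | hn
  · have := hd_le_pd u u'
    omega
  · have := hd_lt_pd u u' h0 hn
    omega
end
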